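/- arXiv:1912.08690 — 10 statements merged into one kernel-verified Lean document; each statement's English description precedes it below -/
import Mathlib

section
/- For every infinite subset J of the open interval (0, 1/2), the set of geometric vectors {g_λ : λ ∈ J}, where g_λ = (λ^j)_{j<ω} ∈ ℓ₁, has dense linear span in ℓ₁. -/
/-!
A continuous functional `φ` on `ℓ¹` is determined by the bounded sequence `aₙ = φ(eₙ)`, and
`φ(g_λ) = ∑ aₙ λⁿ` is a power series converging on the unit disc. If it vanishes on an infinite
`J ⊆ (0, 1/2)`, it vanishes near an accumulation point of `J` in `[0, 1/2]`, so by the identity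
theorem all `aₙ` vanish and `φ = 0`; by Hahn–Banach the span of the `g_λ` is dense.
-/

open Filter Topology ENNReal

theorem Submodule.dense_span_of_forall_dual_eq_zero {𝕜 E : Type*} [RCLike 𝕜]
    [NormedAddCommGroup E] [NormedSpace 𝕜 E] {s : Set E}
    (h : ∀ φ : StrongDual 𝕜 E, (∀ x ∈ s, φ x = 0) → φ = 0) :
    Dense (span 𝕜 s : Set E) := by
  set K := (span 𝕜 s).topologicalClosure
  have : IsClosed (K : Set E) := (span 𝕜 s).isClosed_topologicalClosure
  rw [dense_iff_topologicalClosure_eq_top, eq_top_iff']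
  by_contra! ⟨x, hx⟩
  obtain ⟨f, hf⟩ := SeparatingDual.exists_ne_zero (R := 𝕜) (x := K.mkQ x) (by simpa using hx)
  have : f.comp K.mkQL = 0 := h _ fun y hy => by
    simp [(Submodule.Quotient.mk_eq_zero K).2 ((span 𝕜 s).le_topologicalClosure (subset_span hy))]
  exact hf (by simpa using congr($this x))

section NontriviallyNormedField

variable {ι 𝕜 : Type*} [DecidableEq ι] [NontriviallyNormedField 𝕜] {p : ℝ≥0∞}

theorem memℓp_one_geometric {z : 𝕜} (hz : ‖z‖ < 1) : Memℓp (fun j : ℕ => z ^ j) 1 :=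
  memℓp_gen (by simpa using summable_norm_geometric_of_norm_lt_one hz)

theorem lp.hasSum_mul_apply_single [Fact (1 ≤ p)] (hp : p ≠ ⊤)
    (φ : StrongDual 𝕜 (lp (fun _ : ι => 𝕜) p)) (f : lp (fun _ : ι => 𝕜) p) :
    HasSum (fun i => f i * φ (lp.single p i 1)) (φ f) := by
  refine ((lp.hasSum_single hp f).mapL φ).congr_fun fun i => ?_
  rw [← smul_eq_mul, ← map_smul, ← lp.single_smul, smul_eq_mul, mul_one]

theorem lp.norm_apply_single_one_le [Fact (1 ≤ p)] (hp : 0 < p)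
    (φ : StrongDual 𝕜 (lp (fun _ : ι => 𝕜) p)) (i : ι) :
    ‖φ (lp.single p i 1)‖ ≤ ‖φ‖ := by
  simpa [lp.norm_single hp] using φ.le_opNorm (lp.single p i 1)

end NontriviallyNormedField

section RCLike

variable {𝕜 : Type*} [RCLike 𝕜]

theorem eq_zero_of_frequently_hasSum_mul_pow_eq_zero {a : ℕ → 𝕜} {C : ℝ}
    (ha : ∀ n, ‖a n‖ ≤ C) {z₀ : 𝕜} (hz₀ : ‖z₀‖ < 1)
    (h : ∃ᶠ z in 𝓝[≠] z₀, HasSum (fun n => a n * z ^ n) 0) : a = 0 := by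
  set P := FormalMultilinearSeries.ofScalars 𝕜 a
  have hrad : 1 ≤ P.radius :=
    P.le_radius_of_bound C (r := 1) fun n => by
      simpa [P, FormalMultilinearSeries.ofScalars_norm] using ha n
  have hP : HasFPowerSeriesOnBall P.sum P 0 1 :=
    (P.hasFPowerSeriesOnBall (zero_lt_one.trans_le hrad)).mono zero_lt_one hrad
  have hball : Metric.eball (0 : 𝕜) 1 = Metric.ball 0 1 := by
    simpa using Metric.eball_coe (x := (0 : 𝕜)) (ε := 1)
  have hzero : Set.EqOn P.sum 0 (Metric.eball 0 1) := by
    refine hP.analyticOnNhd.eqOn_zero_of_preconnected_of_frequently_eq_zero ?_ ?_ ?_ (z₀ := z₀)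
    · simpa [hball] using (convex_ball (0 : 𝕜) 1).isPreconnected
    · simpa [hball] using hz₀
    · refine h.mono fun z hz => ?_
      change FormalMultilinearSeries.ofScalarsSum a z = 0
      rw [FormalMultilinearSeries.ofScalars_sum_eq, ← hz.tsum_eq]
      rfl
  exact (FormalMultilinearSeries.ofScalars_series_eq_zero (E := 𝕜)).1
    (hP.congr hzero).hasFPowerSeriesAt.eq_zero

theorem lp.eq_zero_of_apply_geometric_eq_zero
    (φ : StrongDual 𝕜 (lp (fun _ : ℕ => 𝕜) 1)) {J : Set 𝕜} {z₀ : 𝕜} (hz₀ : ‖z₀‖ < 1)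
    (hJ : AccPt z₀ (𝓟 J))
    (hφ : ∀ f : lp (fun _ : ℕ => 𝕜) 1, (∃ z ∈ J, ∀ j, f j = z ^ j) → φ f = 0) :
    φ = 0 := by
  set a : ℕ → 𝕜 := fun n => φ (lp.single 1 n 1)
  have ha : a = 0 := by
    refine eq_zero_of_frequently_hasSum_mul_pow_eq_zero
      (lp.norm_apply_single_one_le one_pos φ) hz₀ ?_
    have hnear : ∀ᶠ z in 𝓝[≠] z₀, ‖z‖ < 1 :=
      nhdsWithin_le_nhds ((isOpen_lt continuous_norm continuous_const).mem_nhds hz₀)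
    refine ((accPt_iff_frequently_nhdsNE.1 hJ).and_eventually hnear).mono fun z hz => ?_
    obtain ⟨hzJ, hz⟩ := hz
    have hg := lp.hasSum_mul_apply_single one_ne_top φ ⟨_, memℓp_one_geometric hz⟩
    rw [hφ _ ⟨z, hzJ, fun j => rfl⟩] at hg
    simpa only [mul_comm] using hg
  ext f
  have hf := lp.hasSum_mul_apply_single one_ne_top φ f
  simp only [show ∀ n, φ (lp.single 1 n 1) = 0 from congrFun ha, mul_zero] at hf
  exact hf.unique hasSum_zero

end RCLike

theorem stmt_1 (J : Set ℝ) (hJ : J ⊆ Set.Ioo (0 : ℝ) (1/2)) (hJinf : J.Infinite) :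
    Dense (Submodule.span ℝ
      {f : lp (fun _ : ℕ => ℝ) 1 | ∃ l ∈ J, ∀ j : ℕ, f j = l ^ j} : Set (lp (fun _ : ℕ => ℝ) 1)) := by
  obtain ⟨x₀, hx₀, hacc⟩ :=
    hJinf.exists_accPt_of_subset_isCompact isCompact_Icc (hJ.trans Set.Ioo_subset_Icc_self)
  have hx₀_lt : ‖x₀‖ < 1 := by
    rw [Real.norm_eq_abs, abs_lt]
    constructor <;> linarith [hx₀.1, hx₀.2]
  exact Submodule.dense_span_of_forall_dual_eq_zero fun φ hφ =>
    lp.eq_zero_of_apply_geometric_eq_zero φ hx₀_lt hacc hφ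
end

section
/- Every separable Banach space contains an overcomplete sequence, i.e., a sequence all of whose subsequences are linearly dense. -/
/-!
Normalise a dense sequence to `c k` with `‖c k‖ ≤ 1` and let `x n = ∑ₖ n⁻ᵏ • c k` be the values
at `1 / n` of an `X`-valued power series converging on the unit ball. If a closed subspace `V`
contains `x n` for infinitely many `n`, the image of this power series in `X ⧸ V` is analytic with
zeros accumulating at `0`, so by the identity theorem all its coefficients vanish: every `c k` lies
in `V`, hence `V = X`.
-/

open Filter Topology

namespace FormalMultilinearSeries

variable {𝕜 E : Type*} [NontriviallyNormedField 𝕜] [NormedAddCommGroup E] [NormedSpace 𝕜 E]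

variable (𝕜) in
/-- The power series `∑ zⁿ • c n`. -/
def ofCoeff (c : ℕ → E) : FormalMultilinearSeries 𝕜 𝕜 E :=
  fun n => ContinuousMultilinearMap.mkPiRing 𝕜 (Fin n) (c n)

@[simp]
theorem coeff_ofCoeff (c : ℕ → E) : (ofCoeff 𝕜 c).coeff = c :=
  funext fun n => by simp [coeff, ofCoeff]

theorem one_le_radius_ofCoeff {c : ℕ → E} {C : ℝ} (hc : ∀ n, ‖c n‖ ≤ C) :
    1 ≤ (ofCoeff 𝕜 c).radius := by
  simpa using (ofCoeff 𝕜 c).le_radius_of_bound C (r := 1) fun n => by simpa using hc n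

variable [CompleteSpace E] {p : FormalMultilinearSeries 𝕜 𝕜 E}

theorem coeff_mem_of_frequently_sum_mem (hp : 0 < p.radius) {V : Submodule 𝕜 E}
    (hV : IsClosed (V : Set E)) (h : ∃ᶠ z in 𝓝[≠] 0, p.sum z ∈ V) (n : ℕ) : p.coeff n ∈ V := by
  have := hV
  have hq := V.mkQL.comp_hasFPowerSeriesOnBall (p.hasFPowerSeriesOnBall hp)
  have hzero : ∀ᶠ z in 𝓝 0, V.mkQL (p.sum z) = 0 :=
    hq.analyticAt.frequently_zero_iff_eventually_zero.mp <|
      h.mono fun z hz => (Submodule.Quotient.mk_eq_zero V).mpr hz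
  exact (Submodule.Quotient.mk_eq_zero V).mp
    (congrArg (coeff · n) (hq.hasFPowerSeriesAt.eq_zero_of_eventually hzero))

theorem span_range_coeff_le_topologicalClosure (hp : 0 < p.radius) {S : Set 𝕜}
    (hS : ∃ᶠ z in 𝓝[≠] 0, z ∈ S) :
    Submodule.span 𝕜 (Set.range p.coeff) ≤ (Submodule.span 𝕜 (p.sum '' S)).topologicalClosure := by
  refine Submodule.span_le.mpr ?_
  rintro _ ⟨n, rfl⟩
  refine p.coeff_mem_of_frequently_sum_mem hp (Submodule.isClosed_topologicalClosure _) ?_ n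
  exact hS.mono fun z hz =>
    Submodule.le_topologicalClosure _ (Submodule.subset_span (Set.mem_image_of_mem _ hz))

end FormalMultilinearSeries

theorem exists_norm_le_one_dense_span_range (X : Type*) [NormedAddCommGroup X] [NormedSpace ℝ X]
    [TopologicalSpace.SeparableSpace X] :
    ∃ c : ℕ → X, (∀ n, ‖c n‖ ≤ 1) ∧ Dense (Submodule.span ℝ (Set.range c) : Set X) := by
  have : Nonempty X := ⟨0⟩
  obtain ⟨d, hd⟩ := TopologicalSpace.exists_dense_seq X
  have hpos : ∀ n, 0 < 1 + ‖d n‖ := fun n => by positivity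
  refine ⟨fun n => (1 + ‖d n‖)⁻¹ • d n, fun n => ?_, hd.mono ?_⟩
  · rw [norm_smul, Real.norm_of_nonneg (inv_nonneg.mpr (hpos n).le), inv_mul_le_one₀ (hpos n)]
    linarith
  · rintro _ ⟨n, rfl⟩
    have hd_eq : d n = (1 + ‖d n‖) • (1 + ‖d n‖)⁻¹ • d n := by
      rw [smul_inv_smul₀ (hpos n).ne']
    rw [hd_eq]
    exact Submodule.smul_mem _ _ (Submodule.subset_span ⟨n, rfl⟩)

theorem stmt_3 {X : Type*} [NormedAddCommGroup X] [NormedSpace ℝ X] [CompleteSpace X]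
    [TopologicalSpace.SeparableSpace X] :
    ∃ x : ℕ → X, ∀ M : Set ℕ, M.Infinite → Dense (Submodule.span ℝ (x '' M) : Set X) := by
  obtain ⟨c, hc_norm, hc_dense⟩ := exists_norm_le_one_dense_span_range X
  set p := FormalMultilinearSeries.ofCoeff ℝ c
  have hp : 0 < p.radius :=
    zero_lt_one.trans_le (FormalMultilinearSeries.one_le_radius_ofCoeff hc_norm)
  refine ⟨fun n => p.sum (n : ℝ)⁻¹, fun M hM => ?_⟩
  have ht : Tendsto (fun n : ℕ => (n : ℝ)⁻¹) atTop (𝓝[≠] 0) :=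
    (tendsto_inv_atTop_nhdsGT_zero.comp tendsto_natCast_atTop_atTop).mono_right
      (nhdsWithin_mono _ fun _ hz => ne_of_gt hz)
  have hfreq : ∃ᶠ z in 𝓝[≠] (0 : ℝ), z ∈ (fun n : ℕ => (n : ℝ)⁻¹) '' M :=
    ht.frequently (Nat.frequently_atTop_iff_infinite.mpr hM |>.mono fun n hn => ⟨n, hn, rfl⟩)
  rw [Submodule.dense_iff_topologicalClosure_eq_top] at hc_dense ⊢
  refine top_unique (hc_dense ▸ Submodule.topologicalClosure_minimal _ ?_
    (Submodule.isClosed_topologicalClosure _))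
  have hspan := p.span_range_coeff_le_topologicalClosure hp hfreq
  rwa [FormalMultilinearSeries.coeff_ofCoeff, Set.image_image] at hspan
end

section
/- Let X be a Banach space with dens X = κ where cf(κ) ≥ 𝔠⁺ (the successor of the continuum). Then X contains no overcomplete set. -/
/-!
If `dim X ≥ 2`, a continuous surjection `T : X → ℝ²` exhibits `X` as a union of `𝔠` closed
hyperplanes: the fibre `T⁻¹{p}` lies in the kernel of `ℓ ∘ T` for any nonzero functional `ℓ`
on `ℝ²` vanishing at `p`. If `cf κ > 𝔠`, the pigeonhole principle puts `κ` points of a set of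
size `κ` into one of these hyperplanes, so their span is not dense. A space of dimension at most
one has only `𝔠` points, so cannot contain a set of size `κ > 𝔠` at all.
-/

open Cardinal

/-- The density character of a topological space: the least cardinality of a dense subset. -/
noncomputable def densityChar (X : Type*) [TopologicalSpace X] : Cardinal :=
  sInf {c : Cardinal | ∃ s : Set X, Dense s ∧ #s = c}

open Function Set

universe u v

theorem one_lt_rank_of_lift_mk_lt {K : Type u} {V : Type v} [Field K] [AddCommGroup V]
    [Module K V] (h : lift.{v} #K < lift.{u} #V) : 1 < Module.rank K V := by
  by_contra! hle
  obtain ⟨v₀, hv₀⟩ := rank_le_one_iff.1 hle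
  exact h.not_ge (lift_mk_le_lift_mk_of_surjective (f := fun r : K ↦ r • v₀) hv₀)

theorem Module.Dual.exists_ne_zero_apply_eq_zero {K V : Type*} [Field K] [AddCommGroup V]
    [Module K V] (h : 1 < Module.rank K V) (v : V) : ∃ f : Module.Dual K V, f ≠ 0 ∧ f v = 0 := by
  have hlt : K ∙ v < ⊤ := by
    refine lt_top_iff_ne_top.2 fun htop ↦ h.not_ge ?_
    rw [← rank_top, ← htop]
    exact (rank_span_le _).trans (by simp)
  obtain ⟨f, hf, hle⟩ := (K ∙ v).exists_le_ker_of_lt_top hlt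
  exact ⟨f, hf, hle (Submodule.mem_span_singleton_self v)⟩

theorem SeparatingDual.exists_surjective_of_le_rank {R V : Type*} [Field R] [TopologicalSpace R]
    [IsTopologicalRing R] [AddCommGroup V] [TopologicalSpace V] [Module R V] [SeparatingDual R V]
    {n : ℕ} (h : n ≤ Module.rank R V) : ∃ T : V →L[R] (Fin n → R), Surjective T := by
  obtain ⟨f, hf⟩ := Module.le_rank_iff_exists_linearMap.1 h
  choose ψ hψ using fun i ↦ (SeparatingDual.dualMap_surjective_iff.2 hf) (LinearMap.proj i)
  exact ⟨ContinuousLinearMap.pi ψ, fun w ↦ ⟨f w, funext fun i ↦ LinearMap.congr_fun (hψ i) w⟩⟩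

theorem Submodule.not_dense_of_le_ker {𝕜 X : Type*} [Field 𝕜] [TopologicalSpace 𝕜] [T2Space 𝕜]
    [AddCommGroup X] [TopologicalSpace X] [Module 𝕜 X] {p : Submodule 𝕜 X} {f : X →L[𝕜] 𝕜}
    (hf : f ≠ 0) (hp : p ≤ LinearMap.ker f.toLinearMap) : ¬ Dense (p : Set X) := fun hd ↦
  hf <| ContinuousLinearMap.coe_injective <| LinearMap.ext <| congrFun <|
    Continuous.ext_on hd f.continuous continuous_const fun _ hx ↦ hp hx

theorem exists_hyperplane_cover_of_one_lt_rank {X : Type*} [NormedAddCommGroup X]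
    [NormedSpace ℝ X] (h : 1 < Module.rank ℝ X) :
    ∃ φ : X → StrongDual ℝ X, #(range φ) ≤ 𝔠 ∧ ∀ x, φ x ≠ 0 ∧ φ x x = 0 := by
  obtain ⟨T, hT⟩ := SeparatingDual.exists_surjective_of_le_rank (R := ℝ) (V := X) (n := 2)
    (by exact_mod_cast two_le_iff_one_lt.2 h)
  choose ℓ hℓ using Module.Dual.exists_ne_zero_apply_eq_zero (K := ℝ) (V := Fin 2 → ℝ) (by simp)
  let g : (Fin 2 → ℝ) → StrongDual ℝ X := fun p ↦ (LinearMap.toContinuousLinearMap (ℓ p)).comp T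
  refine ⟨g ∘ T, ?_, fun x ↦ ⟨?_, (hℓ (T x)).2⟩⟩
  · calc #(range (g ∘ T)) ≤ #(range g) := mk_le_mk_of_subset (range_comp_subset_range T g)
      _ ≤ lift #(Fin 2 → ℝ) := by simpa using mk_range_le_lift (f := g)
      _ = 𝔠 := by
        have : #(Fin 2 → ℝ) = 𝔠 := by
          simp only [mk_pi, mk_real, prod_const, mk_fin, lift_id]
          exact_mod_cast power_nat_eq aleph0_le_continuum one_le_two
        rw [this, lift_continuum]
  · intro h0
    refine (hℓ (T x)).1 (LinearMap.ext fun v ↦ ?_)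
    obtain ⟨w, rfl⟩ := hT v
    exact DFunLike.congr_fun h0 w

theorem stmt_7_general {X : Type*} [NormedAddCommGroup X] [NormedSpace ℝ X]
    (κ : Cardinal)
    (hcof : Order.succ Cardinal.continuum ≤ (Cardinal.ord κ).cof) :
    ¬ ∃ S : Set X, #S = κ ∧
      ∀ Λ : Set X, Λ ⊆ S → #Λ = #S → Dense (Submodule.span ℝ Λ : Set X) := by
  rintro ⟨S, rfl, hdense⟩
  have hcof_gt : 𝔠 < (#S).ord.cof := Order.succ_le_iff.1 hcof
  have hS : 𝔠 < #S := hcof_gt.trans_le (Ordinal.cof_ord_le _)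
  obtain ⟨φ, hφcard, hφ⟩ := exists_hyperplane_cover_of_one_lt_rank (X := X)
    (one_lt_rank_of_lift_mk_lt (by simpa [mk_real] using hS.trans_le (mk_set_le S)))
  obtain ⟨⟨_, x, rfl⟩, Λ, hΛS, hΛcard, hΛ⟩ := infinite_pigeonhole_set
    (fun s : S ↦ rangeFactorization φ s) #S le_rfl (aleph0_le_continuum.trans hS.le)
    (hφcard.trans_lt hcof_gt)
  refine Submodule.not_dense_of_le_ker (hφ x).1 (Submodule.span_le.2 fun s hs ↦ ?_)
    (hdense Λ hΛS (le_antisymm (mk_le_mk_of_subset hΛS) hΛcard))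
  have hφs : φ s = φ x := congrArg Subtype.val (hΛ hs)
  exact hφs ▸ (hφ s).2

theorem stmt_7 {X : Type*} [NormedAddCommGroup X] [NormedSpace ℝ X] [CompleteSpace X]
    (κ : Cardinal) (hκ : densityChar X = κ)
    (hcof : Order.succ Cardinal.continuum ≤ (Cardinal.ord κ).cof) :
    ¬ ∃ S : Set X, #S = κ ∧
      ∀ Λ : Set X, Λ ⊆ S → #Λ = #S → Dense (Submodule.span ℝ Λ : Set X) :=
  stmt_7_general κ hcof
end

section
/- Let κ ≥ ω₂ and let X be a Banach space with dens X = κ admitting a fundamental biorthogonal system {x_α; f_α}_{α<κ}. Then X contains no overcomplete set. -/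
open Cardinal

universe u

/-!
Every vector has countable support with respect to the biorthogonal system, being a limit of
finitely supported ones. Let `S` have cardinality `κ` and put `Z α = S ∩ ker f_α`. If every `Z α`
had cardinality `< κ`, a pigeonhole argument (split according to whether `ℵ₁ < cf κ`) would give
`ℵ₁` indices `α` with `#(Z α) ≤ ν` for one `ν < κ`; the union of these `Z α` is then smaller than
`S`, and a point of `S` outside it has uncountable support. Hence some `Z α` is a subset of `S` of
full cardinality whose span lies in the closed hyperplane `ker f_α`, which misses `x_α`.
-/
theorem exists_lt_le_mk_setOf_le_of_lt_cof {ι : Type u} {θ : Cardinal.{u}} (hθ : θ ≤ #ι)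
    (hθcof : θ < (#ι).ord.cof) (μ : ι → Cardinal.{u}) (hμ : ∀ α, μ α < #ι) :
    ∃ ν < #ι, θ ≤ #{α | μ α ≤ ν} := by
  obtain ⟨A, hA⟩ := le_mk_iff_exists_set.1 hθ
  refine ⟨⨆ a : A, μ a, iSup_lt_of_lt_cof_ord (hA ▸ hθcof) fun a ↦ hμ a, ?_⟩
  calc θ = #A := hA.symm
    _ ≤ #{α | μ α ≤ ⨆ a : A, μ a} :=
      mk_le_mk_of_subset fun a ha ↦ le_ciSup bddAbove_of_small (⟨a, ha⟩ : A)

theorem exists_lt_le_mk_setOf_le_of_cof_le {ι : Type u} (hι : ℵ₀ ≤ #ι) {θ : Cardinal.{u}}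
    (hθ : θ < #ι) (hθcof : (#ι).ord.cof ≤ θ) (μ : ι → Cardinal.{u}) (hμ : ∀ α, μ α < #ι) :
    ∃ ν < #ι, θ ≤ #{α | μ α ≤ ν} := by
  by_contra! hsmall
  obtain ⟨s, hs, hscard⟩ := Order.exists_cof_eq (#ι).ord.ToType
  rw [Ordinal.cof_toType] at hscard
  have hcover : (Set.univ : Set ι) ⊆ ⋃ t : s, {α | μ α ≤ (t.1 : Ordinal).card} := by
    intro α _
    obtain ⟨t, hts, ht⟩ := hs (Ordinal.ToType.mk ⟨(μ α).ord, ord_lt_ord.2 (hμ α)⟩)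
    exact Set.mem_iUnion.2 ⟨⟨t, hts⟩, ord_le.1 (Ordinal.ToType.mk.le_symm_apply.2 ht)⟩
  have hcard (t : (#ι).ord.ToType) : (t : Ordinal).card < #ι :=
    lt_ord.1 (Ordinal.ToType.toOrd t).2
  refine (lt_irrefl #ι) ?_
  calc #ι = #(Set.univ : Set ι) := mk_univ.symm
    _ ≤ #(⋃ t : s, {α | μ α ≤ (t.1 : Ordinal).card}) := mk_le_mk_of_subset hcover
    _ ≤ Cardinal.sum fun t : s ↦ #{α | μ α ≤ (t.1 : Ordinal).card} := mk_iUnion_le_sum_mk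
    _ ≤ Cardinal.sum fun _ : s ↦ θ := sum_le_sum _ _ fun t ↦ (hsmall _ (hcard t)).le
    _ = #s * θ := sum_const' _ _
    _ < #ι := mul_lt_of_lt hι (hscard ▸ hθcof.trans_lt hθ) hθ

theorem exists_lt_le_mk_setOf_le {ι : Type u} (hι : ℵ₀ ≤ #ι) {θ : Cardinal.{u}}
    (hθ : θ < #ι) (μ : ι → Cardinal.{u}) (hμ : ∀ α, μ α < #ι) :
    ∃ ν < #ι, θ ≤ #{α | μ α ≤ ν} := by
  rcases lt_or_ge θ (#ι).ord.cof with hθcof | hθcof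
  · exact exists_lt_le_mk_setOf_le_of_lt_cof hθ.le hθcof μ hμ
  · exact exists_lt_le_mk_setOf_le_of_cof_le hι hθ hθcof μ hμ

theorem exists_mk_eq_of_countable_setOf_notMem {ι β : Type u} (hιβ : #ι = #β)
    (hβ : ℵ_ 2 ≤ #β) (Z : ι → Set β) (hZ : ∀ b, {α | b ∉ Z α}.Countable) :
    ∃ α, #(Z α) = #β := by
  by_contra! hne
  have hℵ₀ : ℵ₀ ≤ #β := (aleph0_le_aleph 2).trans hβ
  have hℵ₁ : ℵ_ 1 < #β := (aleph_lt_aleph.2 one_lt_two).trans_le hβ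
  have hZlt (α : ι) : #(Z α) < #ι := hιβ ▸ (mk_set_le (Z α)).lt_of_ne (hne α)
  obtain ⟨ν, hν, hA⟩ := exists_lt_le_mk_setOf_le (hιβ ▸ hℵ₀) (hιβ ▸ hℵ₁) _ hZlt
  obtain ⟨A, hAν, hAcard⟩ := le_mk_iff_exists_subset.1 hA
  have hunion : #(⋃ a ∈ A, Z a) < #β :=
    calc #(⋃ a ∈ A, Z a) ≤ #A * ⨆ a : A, #(Z a) := mk_biUnion_le Z A
      _ ≤ ℵ_ 1 * ν := mul_le_mul' hAcard.le (ciSup_le' fun a ↦ hAν a.2)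
      _ < #β := mul_lt_of_lt hℵ₀ hℵ₁ (hιβ ▸ hν)
  obtain ⟨b, hb⟩ : ∃ b, b ∉ ⋃ a ∈ A, Z a := by
    by_contra! hall
    exact hunion.not_ge (mk_univ.symm.le.trans (mk_le_mk_of_subset fun b _ ↦ hall b))
  have hAb : A ⊆ {α | b ∉ Z α} := fun a ha hba ↦ hb (Set.mem_biUnion ha hba)
  have hAcount : #A ≤ ℵ₀ := ((hZ b).mono hAb).le_aleph0
  exact (aleph0_lt_aleph_one.trans_eq hAcard.symm).not_ge hAcount

theorem finite_setOf_apply_ne_zero_of_mem_span {R M ι : Type*} [Semiring R] [AddCommMonoid M]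
    [Module R M] {x : ι → M} {f : ι → M →ₗ[R] R} (hbi : ∀ α β, α ≠ β → f α (x β) = 0)
    {y : M} (hy : y ∈ Submodule.span R (Set.range x)) : {α | f α y ≠ 0}.Finite := by
  obtain ⟨c, rfl⟩ := Finsupp.mem_span_range_iff_exists_finsupp.1 hy
  refine c.support.finite_toSet.subset fun α hα ↦ ?_
  by_contra hαc
  refine hα ?_
  rw [map_finsuppSum]
  refine Finset.sum_eq_zero fun β hβ ↦ ?_
  dsimp only
  rw [map_smul, hbi α β (ne_of_mem_of_not_mem hβ hαc).symm, smul_zero]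

theorem countable_setOf_apply_ne_zero {R M ι : Type*} [Semiring R] [TopologicalSpace R]
    [T1Space R] [AddCommMonoid M] [Module R M] [TopologicalSpace M] [FrechetUrysohnSpace M]
    {x : ι → M} {f : ι → M →L[R] R} (hbi : ∀ α β, α ≠ β → f α (x β) = 0)
    (hdense : Dense (Submodule.span R (Set.range x) : Set M)) (s : M) :
    {α | f α s ≠ 0}.Countable := by
  obtain ⟨y, hy, hlim⟩ := mem_closure_iff_seq_limit.1 (hdense s)
  refine (Set.countable_iUnion fun n ↦
    (finite_setOf_apply_ne_zero_of_mem_span (f := fun α ↦ (f α : M →ₗ[R] R)) hbi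
      (hy n)).countable).mono fun α hα ↦ ?_
  by_contra hα'
  have hzero (n : ℕ) : f α (y n) = 0 := by_contra fun h ↦ hα' (Set.mem_iUnion.2 ⟨n, h⟩)
  have hlim' := ((f α).continuous.tendsto s).comp hlim
  exact hα (tendsto_const_nhds_iff.1 (hlim'.congr hzero)).symm

theorem ContinuousLinearMap.not_dense_span_of_apply_eq_zero {R M N : Type*} [Semiring R]
    [AddCommMonoid M] [Module R M] [TopologicalSpace M] [AddCommMonoid N] [Module R N]
    [TopologicalSpace N] [T1Space N] {φ : M →L[R] N} (hφ : φ ≠ 0) {Λ : Set M}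
    (hΛ : ∀ v ∈ Λ, φ v = 0) : ¬ Dense (Submodule.span R Λ : Set M) := by
  intro hdense
  have hsub : Submodule.span R Λ ≤ LinearMap.ker (φ : M →ₗ[R] N) := Submodule.span_le.2 hΛ
  exact hφ (ext fun v ↦ closure_minimal hsub φ.isClosed_ker (hdense v))

theorem stmt_8_general {X : Type u} [NormedAddCommGroup X] [NormedSpace ℝ X]
    (κ : Cardinal) (hκ2 : Cardinal.aleph 2 ≤ κ)
    {ι : Type u} (hι : #ι = κ)
    (x : ι → X) (f : ι → (X →L[ℝ] ℝ))
    (hbi1 : ∀ α, f α (x α) = 1) (hbi2 : ∀ α β, α ≠ β → f α (x β) = 0)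
    (hfund : Dense (Submodule.span ℝ (Set.range x) : Set X)) :
    ¬ ∃ S : Set X, #S = κ ∧
      ∀ Λ : Set X, Λ ⊆ S → #Λ = #S → Dense (Submodule.span ℝ Λ : Set X) := by
  rintro ⟨S, hS, hover⟩
  obtain ⟨α, hα⟩ := exists_mk_eq_of_countable_setOf_notMem (β := S) (hι.trans hS.symm)
    (hS ▸ hκ2) (fun α ↦ {s | f α s = 0}) fun s ↦ by
      simpa using countable_setOf_apply_ne_zero hbi2 hfund s
  have hfα : f α ≠ 0 := fun h ↦ by simpa [h] using hbi1 α
  refine (f α).not_dense_span_of_apply_eq_zero hfα (Λ := (↑) '' {s : S | f α s = 0})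
    (Set.forall_mem_image.2 fun _ ↦ id) (hover _ (Subtype.coe_image_subset _ _) ?_)
  rw [mk_image_eq Subtype.val_injective, hα]

theorem stmt_8 {X : Type u} [NormedAddCommGroup X] [NormedSpace ℝ X] [CompleteSpace X]
    (κ : Cardinal) (hκ : densityChar X = κ) (hκ2 : Cardinal.aleph 2 ≤ κ)
    {ι : Type u} (hι : #ι = κ)
    (x : ι → X) (f : ι → (X →L[ℝ] ℝ))
    (hbi1 : ∀ α, f α (x α) = 1) (hbi2 : ∀ α β, α ≠ β → f α (x β) = 0)
    (hfund : Dense (Submodule.span ℝ (Set.range x) : Set X)) :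
    ¬ ∃ S : Set X, #S = κ ∧
      ∀ Λ : Set X, Λ ⊆ S → #Λ = #S → Dense (Submodule.span ℝ Λ : Set X) :=
  stmt_8_general κ hκ2 hι x f hbi1 hbi2 hfund
end

section
/- Assume the continuum hypothesis. Let X be a Banach space with dens X = dens X* = ω₁ and let C ⊆ X be a set that cannot be covered by countably many hyperplanes. Then C contains an overcomplete set for X, i.e., a subset S with |S| = ω₁ such that every uncountable subset of S is linearly dense in X. -/
/-!
Under CH, `|X*| ≤ dens(X*)^ℵ₀ = ℵ₁^ℵ₀ = 𝔠 = ℵ₁`, so the nonzero functionals can be listed as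
`(f_α)_{α < ω₁}`. Since `C` escapes every countable family of hyperplanes, one can pick
`x_β ∈ C` with `f_α x_β ≠ 0` for all `α < β`. Every uncountable set of indices is cofinal in `ω₁`,
so no nonzero functional vanishes on an uncountable subfamily, whose span is therefore dense by
Hahn–Banach. The same argument rules out a value taken uncountably often: `X` would be spanned by a
single vector, making `X*` separable.
-/

open Cardinal

open Set Filter Topology TopologicalSpace
open scoped Ordinal

theorem continuum_eq_aleph_one_of_univ.{u, v} (h : continuum.{v} = aleph.{v} 1) :
    continuum.{u} = aleph.{u} 1 := by
  apply Cardinal.lift_injective.{v, u}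
  simpa using congrArg Cardinal.lift.{u} h

section DensityChar

variable {X : Type*} [TopologicalSpace X]

theorem densityChar_le_mk {s : Set X} (hs : Dense s) : densityChar X ≤ #s :=
  csInf_le' ⟨s, hs, rfl⟩

theorem exists_dense_mk_eq_densityChar : ∃ s : Set X, Dense s ∧ #s = densityChar X :=
  csInf_mem (s := {c | ∃ s : Set X, Dense s ∧ #s = c}) ⟨_, univ, dense_univ, rfl⟩

theorem densityChar_le_aleph0 [SeparableSpace X] : densityChar X ≤ ℵ₀ := by
  obtain ⟨s, hs, hd⟩ := exists_countable_dense X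
  exact (densityChar_le_mk hd).trans hs.le_aleph0

theorem mk_le_densityChar_pow_aleph0 [FrechetUrysohnSpace X] [T2Space X] :
    #X ≤ densityChar X ^ ℵ₀ := by
  obtain ⟨s, hs, hcard⟩ := exists_dense_mk_eq_densityChar (X := X)
  have hseq : ∀ x : X, ∃ u : ℕ → s, Tendsto (fun n ↦ (u n : X)) atTop (𝓝 x) := by
    intro x
    obtain ⟨u, hus, hu⟩ := mem_closure_iff_seq_limit.1 (hs x)
    exact ⟨fun n ↦ ⟨u n, hus n⟩, hu⟩
  choose u hu using hseq
  calc #X ≤ #(ℕ → s) := mk_le_of_injective (f := u) fun x y hxy ↦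
        tendsto_nhds_unique (hu x) (hxy ▸ hu y)
    _ = densityChar X ^ ℵ₀ := by simp [hcard]

theorem mk_le_aleph_one_of_densityChar_eq [FrechetUrysohnSpace X] [T2Space X]
    (CH : continuum.{v} = aleph.{v} 1) (h : densityChar X = aleph 1) : #X ≤ aleph 1 := by
  have CH' := continuum_eq_aleph_one_of_univ CH
  exact mk_le_densityChar_pow_aleph0.trans (by rw [h, ← CH', continuum_power_aleph0])

end DensityChar

theorem exists_mem_gt_of_not_countable {ι : Type*} [LinearOrder ι]
    (hι : ∀ β : ι, (Iio β).Countable) {B : Set ι} (hB : ¬ B.Countable) (α : ι) :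
    ∃ β ∈ B, α < β := by
  by_contra! h
  exact hB (((hι α).insert α).mono fun β hβ ↦ by simpa [le_iff_eq_or_lt] using h β hβ)

theorem exists_not_countable_preimage_singleton {ι α : Type*} [Uncountable ι] {g : ι → α}
    (hg : (range g).Countable) : ∃ x, ¬ (g ⁻¹' {x}).Countable := by
  by_contra! h
  have := hg.biUnion fun x _ ↦ h x
  rw [biUnion_preimage_singleton, preimage_range] at this
  exact not_countable_univ this

theorem not_subset_biUnion_of_forall_seq {ι α : Type*} [Nonempty ι] {H : ι → Set α}
    {C : Set α} (hC : ∀ σ : ℕ → ι, ¬ C ⊆ ⋃ n, H (σ n)) {s : Set ι} (hs : s.Countable) :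
    ¬ C ⊆ ⋃ i ∈ s, H i := by
  obtain ⟨i₀⟩ := ‹Nonempty ι›
  obtain ⟨σ, hσ⟩ := (hs.insert i₀).exists_eq_range (insert_nonempty i₀ s)
  refine fun hCs ↦ hC σ (hCs.trans (iUnion₂_subset fun i hi ↦ ?_))
  obtain ⟨n, rfl⟩ : i ∈ range σ := hσ ▸ mem_insert_of_mem i₀ hi
  exact subset_iUnion (fun n ↦ H (σ n)) n

theorem exists_forall_lt_notMem {ι α : Type*} [Preorder ι] (hι : ∀ β : ι, (Iio β).Countable)
    {H : ι → Set α} {C : Set α} (hC : ∀ s : Set ι, s.Countable → ¬ C ⊆ ⋃ i ∈ s, H i) :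
    ∃ g : ι → α, (∀ β, g β ∈ C) ∧ ∀ ⦃i β⦄, i < β → g β ∉ H i := by
  have h : ∀ β, ∃ x ∈ C, ∀ i < β, x ∉ H i := fun β ↦ by
    simpa [subset_def] using hC _ (hι β)
  choose g hgC hgH using h
  exact ⟨g, hgC, fun i β hiβ ↦ hgH β i hiβ⟩

theorem mk_toType_omega_one : #(ω₁ : Ordinal.{u}).ToType = ℵ₁ := by
  simp

theorem countable_Iio_toType_omega_one (β : (ω₁ : Ordinal.{u}).ToType) : (Iio β).Countable := by
  have h := mk_Iio_lt β (by simp)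
  rw [mk_toType_omega_one, ← succ_aleph0, Order.lt_succ_iff] at h
  exact le_aleph0_iff_set_countable.1 h

theorem exists_surjective_toType_omega_one {α : Type u} [Nonempty α] (h : #α ≤ ℵ₁) :
    ∃ F : (ω₁ : Ordinal.{u}).ToType → α, Function.Surjective F := by
  rw [← mk_toType_omega_one, Cardinal.le_def] at h
  exact Function.exists_surjective_iff.2 ⟨inferInstance, h⟩

instance : Uncountable (ω₁ : Ordinal.{u}).ToType := by
  rw [← aleph0_lt_mk_iff, mk_toType_omega_one]
  exact aleph0_lt_aleph_one

section LocallyConvex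

variable {E : Type*} [AddCommGroup E] [Module ℝ E] [TopologicalSpace E] [IsTopologicalAddGroup E]
  [ContinuousSMul ℝ E] [LocallyConvexSpace ℝ E]

theorem dense_span_of_forall_exists_apply_ne_zero {s : Set E}
    (hs : ∀ f : StrongDual ℝ E, f ≠ 0 → ∃ x ∈ s, f x ≠ 0) : Dense (Submodule.span ℝ s : Set E) := by
  set N := (Submodule.span ℝ s).topologicalClosure
  rw [Submodule.dense_iff_topologicalClosure_eq_top, Submodule.eq_top_iff']
  by_contra! ⟨w, hw⟩
  obtain ⟨f, u, hfN, hfw⟩ :=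
    geometric_hahn_banach_closed_point N.convex (Submodule.span ℝ s).isClosed_topologicalClosure hw
  -- a functional bounded above on a subspace vanishes there: otherwise rescale to hit the bound
  have hf0 : ∀ y ∈ N, f y = 0 := fun y hy ↦ by
    by_contra hfy
    have := hfN _ (N.smul_mem (u / f y) hy)
    rw [map_smul, smul_eq_mul, div_mul_cancel₀ u hfy] at this
    exact this.false
  have hf : f ≠ 0 := by
    rintro rfl
    simp only [zero_apply] at hfN hfw
    linarith [hfN 0 N.zero_mem]
  obtain ⟨x, hx, hfx⟩ := hs f hf
  exact hfx (hf0 x ((Submodule.span ℝ s).le_topologicalClosure (Submodule.subset_span hx)))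

theorem dense_span_of_not_countable_preimage {ι : Type*} [LinearOrder ι]
    (hι : ∀ β : ι, (Iio β).Countable) {F : ι → StrongDual ℝ E}
    (hF : ∀ f : StrongDual ℝ E, f ≠ 0 → ∃ i, F i = f) {g : ι → E}
    (hg : ∀ ⦃i β⦄, i < β → F i (g β) ≠ 0) {Λ : Set E} (hΛ : ¬ (g ⁻¹' Λ).Countable) :
    Dense (Submodule.span ℝ Λ : Set E) := by
  refine dense_span_of_forall_exists_apply_ne_zero fun f hf ↦ ?_
  obtain ⟨i, rfl⟩ := hF f hf
  obtain ⟨β, hβ, hiβ⟩ := exists_mem_gt_of_not_countable hι hΛ i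
  exact ⟨g β, hβ, hg hiβ⟩

end LocallyConvex

theorem finiteDimensional_of_dense_span {X : Type*} [NormedAddCommGroup X] [NormedSpace ℝ X]
    {s : Set X} (hs : s.Finite) (hd : Dense (Submodule.span ℝ s : Set X)) :
    FiniteDimensional ℝ X := by
  have := FiniteDimensional.span_of_finite ℝ hs
  have htop : Submodule.span ℝ s = ⊤ := SetLike.coe_injective <|
    (Submodule.closed_of_finiteDimensional _).closure_eq.symm.trans hd.closure_eq
  exact Module.finite_def.2 ⟨hs.toFinset, by simpa using htop⟩

theorem stmt_10_general {X : Type*} [NormedAddCommGroup X] [NormedSpace ℝ X]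
    (CH : Cardinal.continuum = Cardinal.aleph 1)
    (hdX' : densityChar (X →L[ℝ] ℝ) = Cardinal.aleph 1)
    (C : Set X)
    (hC : ∀ f : ℕ → (X →L[ℝ] ℝ), (∀ n, f n ≠ 0) → ¬ C ⊆ ⋃ n, {x : X | f n x = 0}) :
    ∃ S : Set X, S ⊆ C ∧ #S = Cardinal.aleph 1 ∧
      ∀ Λ : Set X, Λ ⊆ S → ¬ Λ.Countable → Dense (Submodule.span ℝ Λ : Set X) := by
  have hsep : ¬ SeparableSpace (X →L[ℝ] ℝ) := fun _ ↦
    densityChar_le_aleph0.not_gt (hdX' ▸ aleph0_lt_aleph_one)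
  have : Nontrivial (X →L[ℝ] ℝ) := by
    by_contra h
    rw [not_nontrivial_iff_subsingleton] at h
    exact hsep inferInstance
  have : Nonempty {f : X →L[ℝ] ℝ // f ≠ 0} := nonempty_subtype.2 (exists_ne 0)
  obtain ⟨F, hF⟩ := exists_surjective_toType_omega_one
    ((mk_subtype_le fun f : X →L[ℝ] ℝ ↦ f ≠ 0).trans (mk_le_aleph_one_of_densityChar_eq CH hdX'))
  obtain ⟨g, hgC, hg⟩ := exists_forall_lt_notMem countable_Iio_toType_omega_one
    (H := fun i ↦ {x | (F i : X →L[ℝ] ℝ) x = 0}) fun s hs ↦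
      not_subset_biUnion_of_forall_seq (fun σ ↦ hC (fun n ↦ F (σ n)) fun n ↦ (F (σ n)).2) hs
  have hdense (Λ : Set X) := dense_span_of_not_countable_preimage (Λ := Λ)
    countable_Iio_toType_omega_one (fun f hf ↦ (hF ⟨f, hf⟩).imp fun _ ↦ congrArg Subtype.val) hg
  refine ⟨range g, range_subset_iff.2 hgC, le_antisymm ?_ ?_, fun Λ hΛ hΛc ↦ hdense Λ ?_⟩
  · exact mk_range_le.trans_eq mk_toType_omega_one
  · rw [aleph_one_le_iff, aleph0_lt_mk_iff, ← not_countable_iff, countable_coe_iff]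
    intro hcount
    obtain ⟨x, hx⟩ := exists_not_countable_preimage_singleton hcount
    have := finiteDimensional_of_dense_span (finite_singleton x) (hdense {x} hx)
    exact hsep inferInstance
  · exact fun h ↦ hΛc (image_preimage_eq_of_subset hΛ ▸ h.image g)

theorem stmt_10 {X : Type*} [NormedAddCommGroup X] [NormedSpace ℝ X] [CompleteSpace X]
    (CH : Cardinal.continuum = Cardinal.aleph 1)
    (hdX : densityChar X = Cardinal.aleph 1)
    (hdX' : densityChar (X →L[ℝ] ℝ) = Cardinal.aleph 1)
    (C : Set X)
    (hC : ∀ f : ℕ → (X →L[ℝ] ℝ), (∀ n, f n ≠ 0) → ¬ C ⊆ ⋃ n, {x : X | f n x = 0}) :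
    ∃ S : Set X, S ⊆ C ∧ #S = Cardinal.aleph 1 ∧
      ∀ Λ : Set X, Λ ⊆ S → ¬ Λ.Countable → Dense (Submodule.span ℝ Λ : Set X) :=
  stmt_10_general CH hdX' C hC
end

section
/- Let X be a Banach space and let C ⊆ X be a convex, weakly compact, linearly dense subset. Then C cannot be covered by countably many hyperplanes. -/
/-!
A weakly compact set is a compact Hausdorff space in the weak topology, so by Baire's theorem
one of the countably many closed kernels covering it contains a nonempty relatively open piece.
A convex set that meets an open set `U` inside a kernel lies entirely in that kernel: the segment
from a point of `U ∩ C` towards any other point of `C` stays in `U` for a while. Hence one of the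
functionals vanishes on `C`, and therefore on its dense linear span, so it is zero.
-/

open Filter Topology

noncomputable def StrongDual.toWeakSpaceDual {𝕜 E : Type*} [CommSemiring 𝕜] [TopologicalSpace 𝕜]
    [ContinuousAdd 𝕜] [ContinuousConstSMul 𝕜 𝕜] [AddCommMonoid E] [Module 𝕜 E]
    [TopologicalSpace E] (f : StrongDual 𝕜 E) : StrongDual 𝕜 (WeakSpace 𝕜 E) where
  toLinearMap := (f : E →ₗ[𝕜] 𝕜).comp (toWeakSpace 𝕜 E).symm.toLinearMap
  cont := WeakBilin.eval_continuous (topDualPairing 𝕜 E).flip f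

theorem IsCompact.exists_isOpen_inter_subset_of_subset_iUnion {α ι : Type*} [TopologicalSpace α]
    [T2Space α] [Countable ι] {K : Set α} (hK : IsCompact K) (hne : K.Nonempty)
    {F : ι → Set α} (hF : ∀ i, IsClosed (F i)) (hcover : K ⊆ ⋃ i, F i) :
    ∃ i U, IsOpen U ∧ (U ∩ K).Nonempty ∧ U ∩ K ⊆ F i := by
  have := isCompact_iff_compactSpace.mp hK
  have := hne.to_subtype
  obtain ⟨i, z, hz⟩ := nonempty_interior_of_iUnion_of_closed
    (f := fun i => ((↑) : K → α) ⁻¹' F i) (fun i => (hF i).preimage continuous_subtype_val)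
    (Set.eq_univ_of_forall fun z => by simpa using hcover z.2)
  obtain ⟨V, hVF, hV, hzV⟩ := mem_interior.mp hz
  obtain ⟨U, hU, rfl⟩ := isOpen_induced_iff.mp hV
  exact ⟨i, U, hU, ⟨z, hzV, z.2⟩, fun x ⟨hxU, hxK⟩ => hVF (a := ⟨x, hxK⟩) hxU⟩

theorem Convex.subset_setOf_eq_zero_of_isOpen_inter {E F : Type*} [AddCommGroup E] [Module ℝ E]
    [TopologicalSpace E] [ContinuousAdd E] [ContinuousSMul ℝ E] [AddCommGroup F] [Module ℝ F]
    {C U : Set E} (hC : Convex ℝ C) (hU : IsOpen U) (hne : (U ∩ C).Nonempty) (f : E →ₗ[ℝ] F)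
    (hf : U ∩ C ⊆ {x | f x = 0}) : C ⊆ {x | f x = 0} := by
  obtain ⟨x, hxU, hxC⟩ := hne
  intro y hy
  have hsegment : ∀ᶠ t in 𝓝[>] (0 : ℝ), x + t • (y - x) ∈ U ∧ t ∈ Set.Ioo 0 1 := by
    have hcont : Continuous fun t : ℝ => x + t • (y - x) := by fun_prop
    have hU0 : ∀ᶠ t in 𝓝 (0 : ℝ), x + t • (y - x) ∈ U :=
      hcont.continuousAt.eventually_mem (by simpa using hU.mem_nhds hxU)
    exact (eventually_nhdsWithin_of_eventually_nhds hU0).and (Ioo_mem_nhdsGT zero_lt_one)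
  obtain ⟨t, htU, ht0, ht1⟩ := hsegment.exists
  have hfx : f x = 0 := hf ⟨hxU, hxC⟩
  have hft : t • f y = 0 := by
    simpa [hfx] using hf ⟨htU, hC.add_smul_sub_mem hxC hy ⟨ht0.le, ht1.le⟩⟩
  exact (smul_eq_zero.mp hft).resolve_left ht0.ne'

theorem IsCompact.exists_subset_setOf_eq_zero_of_subset_iUnion {E F ι : Type*}
    [AddCommGroup E] [Module ℝ E] [TopologicalSpace E] [T2Space E] [ContinuousAdd E]
    [ContinuousSMul ℝ E] [AddCommGroup F] [Module ℝ F] [TopologicalSpace F] [T1Space F]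
    [Countable ι] [Nonempty ι]
    {K : Set E} (hK : IsCompact K) (hKc : Convex ℝ K) (f : ι → E →L[ℝ] F)
    (hcover : K ⊆ ⋃ i, {x | f i x = 0}) : ∃ i, K ⊆ {x | f i x = 0} := by
  rcases K.eq_empty_or_nonempty with rfl | hne
  · exact ⟨Classical.arbitrary ι, Set.empty_subset _⟩
  obtain ⟨i, U, hU, hUK, hUf⟩ :=
    hK.exists_isOpen_inter_subset_of_subset_iUnion hne
      (fun i => isClosed_singleton.preimage (f i).continuous) hcover
  exact ⟨i, hKc.subset_setOf_eq_zero_of_isOpen_inter hU hUK (f i).toLinearMap hUf⟩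

theorem stmt_12_general {X : Type*} [NormedAddCommGroup X] [NormedSpace ℝ X]
    (C : Set X) (hconv : Convex ℝ C)
    (hwk : IsCompact ((toWeakSpace ℝ X) '' C : Set (WeakSpace ℝ X)))
    (hdense : Dense (Submodule.span ℝ C : Set X)) :
    ∀ f : ℕ → (X →L[ℝ] ℝ), (∀ n, f n ≠ 0) → ¬ C ⊆ ⋃ n, {x : X | f n x = 0} := by
  intro f hf hsub
  obtain ⟨n, hn⟩ := hwk.exists_subset_setOf_eq_zero_of_subset_iUnion
    (hconv.linear_image (toWeakSpace ℝ X).toLinearMap)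
    (fun n => StrongDual.toWeakSpaceDual (f n)) (by rintro - ⟨x, hx, rfl⟩; exact hsub hx)
  exact hf n (ContinuousLinearMap.ext_on hdense fun x hx => hn ⟨x, hx, rfl⟩)

theorem stmt_12 {X : Type*} [NormedAddCommGroup X] [NormedSpace ℝ X] [CompleteSpace X]
    (C : Set X) (hconv : Convex ℝ C)
    (hwk : IsCompact ((toWeakSpace ℝ X) '' C : Set (WeakSpace ℝ X)))
    (hdense : Dense (Submodule.span ℝ C : Set X)) :
    ∀ f : ℕ → (X →L[ℝ] ℝ), (∀ n, f n ≠ 0) → ¬ C ⊆ ⋃ n, {x : X | f n x = 0} :=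
  stmt_12_general C hconv hwk hdense
end

section
/- Every finite-dimensional real Banach space contains a dense overcomplete sequence: a sequence (x_j)_{j<ω} that is dense in X and such that every subsequence spans X. -/
/-!
Enumerate a countable basis of nonempty open sets as `U 0, U 1, …` and choose `x j ∈ U j`
outside the span of every set of fewer than `d = finrank ℝ X` earlier terms. Such a choice exists
since these spans are finitely many proper, hence closed and nowhere dense, subspaces. The sequence
meets every basic open set, so it is dense, and any `d` of its terms are linearly independent, so
any infinite subsequence spans `X`.
-/

open Set Submodule Module

theorem Submodule.dense_compl_of_ne_top {𝕜 M : Type*} [NontriviallyNormedField 𝕜]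
    [AddCommGroup M] [Module 𝕜 M] [TopologicalSpace M] [ContinuousAdd M] [ContinuousSMul 𝕜 M]
    {p : Submodule 𝕜 M} (hp : p ≠ ⊤) : Dense (p : Set M)ᶜ := by
  rw [← interior_eq_empty_iff_dense_compl, ← not_nonempty_iff_eq_empty]
  exact fun h => hp (p.eq_top_of_nonempty_interior' h)

theorem Submodule.span_finset_ne_top_of_card_lt {K V : Type*} [DivisionRing K] [AddCommGroup V]
    [Module K V] {s : Finset V} (hs : s.card < finrank K V) : span K (s : Set V) ≠ ⊤ := by
  intro h
  have hle := finrank_span_finset_le_card (R := K) s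
  rw [Set.finrank, h, finrank_top] at hle
  omega

theorem linearIndepOn_of_notMem_span_image {K V : Type*} [DivisionRing K] [AddCommGroup V]
    [Module K V] {x : ℕ → V} {n : ℕ}
    (hx : ∀ j (s : Finset ℕ), s ⊆ Finset.range j → s.card < n → x j ∉ span K (x '' s))
    {T : Finset ℕ} (hT : T.card ≤ n) : LinearIndepOn K x T := by
  induction T using Finset.induction_on_max with
  | empty => simp
  | insert a T hlt ih =>
    have haT : a ∉ T := fun ha => (hlt a ha).false
    rw [Finset.card_insert_of_notMem haT] at hT
    rw [Finset.coe_insert]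
    exact (ih (by omega)).insert
      (hx a T (fun i hi => Finset.mem_range.2 (hlt i hi)) (by omega))

theorem span_image_eq_top_of_linearIndepOn {K V ι : Type*} [DivisionRing K] [AddCommGroup V]
    [Module K V] [FiniteDimensional K V] {x : ι → V}
    (hx : ∀ T : Finset ι, T.card = finrank K V → LinearIndepOn K x T)
    {M : Set ι} (hM : M.Infinite) : span K (x '' M) = ⊤ := by
  obtain ⟨T, hTM, hT⟩ := hM.exists_subset_card_eq (finrank K V)
  have hspan : span K (x '' T) = ⊤ := by
    rw [image_eq_range]
    exact (hx T hT).span_eq_top_of_card_eq_finrank' (by simpa using hT)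
  exact top_unique (hspan ▸ span_mono (image_mono hTM))

section FiniteDimensional

variable {X : Type*} [NormedAddCommGroup X] [NormedSpace ℝ X] [FiniteDimensional ℝ X]

theorem exists_mem_forall_notMem_span {U : Set X} (hU : IsOpen U) (hne : U.Nonempty)
    (S : Finset X) : ∃ y ∈ U, ∀ s ⊆ S, s.card < finrank ℝ X → y ∉ span ℝ (s : Set X) := by
  classical
  let small := S.powerset.filter (·.card < finrank ℝ X)
  have hdense : Dense (⋂ s ∈ (small : Set (Finset X)), (span ℝ (s : Set X) : Set X)ᶜ) :=
    dense_biInter_of_isOpen (fun s _ => (closed_of_finiteDimensional _).isOpen_compl)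
      small.countable_toSet
      (fun s hs => dense_compl_of_ne_top (span_finset_ne_top_of_card_lt (Finset.mem_filter.1 hs).2))
  obtain ⟨y, hyU, hy⟩ := hdense.inter_open_nonempty U hU hne
  refine ⟨y, hyU, fun s hsS hs => ?_⟩
  exact mem_iInter₂.1 hy s (by simp [small, hsS, hs])

variable (U : ℕ → Set X) (hU : ∀ j, IsOpen (U j)) (hne : ∀ j, (U j).Nonempty)

open Classical in
noncomputable def avoidingSeq : ℕ → X
  | j => (exists_mem_forall_notMem_span (hU j) (hne j)
      (Finset.univ.image fun i : Fin j => avoidingSeq i)).choose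

open Classical in
theorem avoidingSeq_spec (j : ℕ) : avoidingSeq U hU hne j ∈ U j ∧
    ∀ s ⊆ Finset.univ.image (fun i : Fin j => avoidingSeq U hU hne i),
      s.card < finrank ℝ X → avoidingSeq U hU hne j ∉ span ℝ (s : Set X) := by
  rw [avoidingSeq]
  exact (exists_mem_forall_notMem_span (hU j) (hne j) _).choose_spec

theorem avoidingSeq_notMem_span_image {j : ℕ} {s : Finset ℕ} (hs : s ⊆ Finset.range j)
    (hcard : s.card < finrank ℝ X) :
    avoidingSeq U hU hne j ∉ span ℝ (avoidingSeq U hU hne '' s) := by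
  classical
  rw [← Finset.coe_image]
  refine (avoidingSeq_spec U hU hne j).2 _ (fun y hy => ?_) (Finset.card_image_le.trans_lt hcard)
  obtain ⟨i, hi, rfl⟩ := Finset.mem_image.1 hy
  exact Finset.mem_image.2 ⟨⟨i, Finset.mem_range.1 (hs hi)⟩, Finset.mem_univ _, rfl⟩

end FiniteDimensional

theorem stmt_14_general {X : Type*} [NormedAddCommGroup X] [NormedSpace ℝ X]
    [FiniteDimensional ℝ X] :
    ∃ x : ℕ → X, DenseRange x ∧
      ∀ M : Set ℕ, M.Infinite → Submodule.span ℝ (x '' M) = ⊤ := by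
  obtain ⟨B, hBc, hB₀, hB⟩ := TopologicalSpace.exists_countable_basis X
  obtain ⟨V, hV, -⟩ := hB.exists_subset_of_mem_open (mem_univ (0 : X)) isOpen_univ
  obtain ⟨U, rfl⟩ := hBc.exists_eq_range ⟨V, hV⟩
  have hU (j : ℕ) : IsOpen (U j) := hB.isOpen (mem_range_self j)
  have hne (j : ℕ) : (U j).Nonempty :=
    nonempty_iff_ne_empty.2 fun h => hB₀ (h ▸ mem_range_self j)
  refine ⟨avoidingSeq U hU hne, hB.dense_iff.2 ?_, fun M hM => ?_⟩
  · rintro _ ⟨j, rfl⟩ -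
    exact ⟨_, (avoidingSeq_spec U hU hne j).1, mem_range_self j⟩
  · exact span_image_eq_top_of_linearIndepOn (fun T hT =>
      linearIndepOn_of_notMem_span_image (fun _ _ => avoidingSeq_notMem_span_image U hU hne) hT.le) hM

theorem stmt_14 {X : Type*} [NormedAddCommGroup X] [NormedSpace ℝ X]
    [FiniteDimensional ℝ X] (hd : 1 ≤ Module.finrank ℝ X) :
    ∃ x : ℕ → X, DenseRange x ∧
      ∀ M : Set ℕ, M.Infinite → Submodule.span ℝ (x '' M) = ⊤ :=
  stmt_14_general
end

section
/- Let (x_n)_{n<ω} be an almost overcomplete sequence in a normed space X. If (x_n) converges weakly to some x ∈ X, then (x_n) converges to x in norm. -/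
/-!
Suppose `‖x n - l‖ ≥ ε` infinitely often, and put `y n = x n - l`, a weakly null sequence.
Mazur's argument: a finite-dimensional subspace is normed, up to a factor `c < 1`, by finitely many
functionals, and these almost annihilate `y n` for large `n`, so `‖u + t • y n‖ ≥ c ‖u‖` on that
subspace. Extracting a subsequence each of whose terms is, in this sense, almost orthogonal to `l`
and to all earlier terms, with losses whose product stays above `1 / 2`, the odd terms stay at
distance `≥ ε / 4` from the closed span `Y` of the even terms. But `X ⧸ Y` is finite-dimensional,
where weak and norm convergence agree, and `x n ∈ Y` infinitely often; hence `dist (x n, Y) → 0`.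
-/

open Filter Topology Metric Set Submodule

theorem FiniteDimensional.tendsto_of_forall_tendsto_dual {E : Type*} [NormedAddCommGroup E]
    [NormedSpace ℝ E] [FiniteDimensional ℝ E] {ι : Type*} {L : Filter ι} {u : ι → E} {a : E}
    (h : ∀ g : StrongDual ℝ E, Tendsto (fun i => g (u i)) L (𝓝 (g a))) :
    Tendsto u L (𝓝 a) := by
  let e := (Module.finBasis ℝ E).equivFunL
  have he : Tendsto (fun i => e (u i)) L (𝓝 (e a)) :=
    tendsto_pi_nhds.2 fun j => by
      simpa using h ((ContinuousLinearMap.proj (R := ℝ) (φ := fun _ => ℝ) j).comp (e : E →L[ℝ] _))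
  simpa [Function.comp_def] using (e.symm.continuous.tendsto _).comp he

section

variable {X : Type*} [NormedAddCommGroup X] [NormedSpace ℝ X]

theorem tendsto_infDist_of_frequently_mem {Y : Submodule ℝ X} (hY : IsClosed (Y : Set X))
    [FiniteDimensional ℝ (X ⧸ Y)] {x : ℕ → X} {l : X}
    (hweak : ∀ f : StrongDual ℝ X, Tendsto (fun n => f (x n)) atTop (𝓝 (f l)))
    (hfreq : ∃ᶠ n in atTop, x n ∈ Y) :
    Tendsto (fun n => infDist (x n) Y) atTop (𝓝 0) := by
  have : IsClosed (Y : Set X) := hY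
  have hπ : Tendsto (fun n => Y.mkQL (x n)) atTop (𝓝 (Y.mkQL l)) :=
    FiniteDimensional.tendsto_of_forall_tendsto_dual fun g => hweak (g.comp Y.mkQL)
  have hl : Y.mkQL l = 0 :=
    tendsto_nhds_unique_of_frequently_eq hπ tendsto_const_nhds
      (hfreq.mono fun n hn => (Submodule.Quotient.mk_eq_zero Y).2 hn)
  have hnorm : Tendsto (fun n => ‖Y.mkQL (x n)‖) atTop (𝓝 0) := by simpa [hl] using hπ.norm
  exact hnorm.congr fun n => QuotientAddGroup.norm_mk (S := Y.toAddSubgroup) (x n)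

theorem exists_finset_dual_norming (F : Submodule ℝ X) [FiniteDimensional ℝ F] {c : ℝ}
    (hc : c < 1) :
    ∃ T : Finset (StrongDual ℝ X), (∀ g ∈ T, ‖g‖ ≤ 1) ∧ ∀ u ∈ F, ∃ g ∈ T, c * ‖u‖ ≤ g u := by
  classical
  choose g hg_norm hg_eq using fun u : X => exists_dual_vector'' ℝ u
  obtain ⟨T, hT⟩ := (isCompact_sphere (0 : F) 1).elim_finite_subcover
    (fun v : F => {w : F | c < g v w}) (fun v => isOpen_lt continuous_const
      ((g v).continuous.comp continuous_subtype_val))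
    (fun v hv => mem_iUnion.2 ⟨v, by simp_all⟩)
  refine ⟨insert 0 (T.image fun v : F => g v), ?_, fun u hu => ?_⟩
  · simp only [Finset.mem_insert, Finset.mem_image]
    rintro _ (rfl | ⟨v, -, rfl⟩)
    exacts [by simp, hg_norm v]
  rcases eq_or_ne u 0 with rfl | hu0
  · exact ⟨0, Finset.mem_insert_self _ _, by simp⟩
  have hsphere : (⟨‖u‖⁻¹ • u, F.smul_mem _ hu⟩ : F) ∈ sphere (0 : F) 1 := by
    simp [norm_smul, hu0]
  obtain ⟨v, hvT, hv⟩ := mem_iUnion₂.1 (hT hsphere)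
  refine ⟨g v, Finset.mem_insert_of_mem (Finset.mem_image_of_mem _ hvT), ?_⟩
  have hv' : c < ‖u‖⁻¹ * g v u := by simpa using hv
  have hpos : 0 < ‖u‖ := norm_pos_iff.2 hu0
  rw [lt_inv_mul_iff₀ hpos] at hv'
  linarith

theorem eventually_mul_norm_le_norm_add_smul (F : Submodule ℝ X) [FiniteDimensional ℝ F]
    {ι : Type*} {L : Filter ι} {y : ι → X}
    (hy : ∀ g : StrongDual ℝ X, Tendsto (fun i => g (y i)) L (𝓝 0)) {ε c : ℝ} (hε : 0 < ε)
    (hc : c < 1) :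
    ∀ᶠ i in L, ε ≤ ‖y i‖ → ∀ u ∈ F, ∀ t : ℝ, c * ‖u‖ ≤ ‖u + t • y i‖ := by
  obtain ⟨T, hT_norm, hT⟩ := exists_finset_dual_norming F (c := (1 + c) / 2) (by linarith)
  set η := (1 - c) * ε / 4 with hη_def
  have hη : 0 < η := by positivity
  have hsmall : ∀ᶠ i in L, ∀ g ∈ T, |g (y i)| < η :=
    (eventually_all_finset T).2 fun g _ => by
      simpa using (hy g).abs.eventually (gt_mem_nhds (by simpa using hη))
  filter_upwards [hsmall] with i hi hyi u hu t
  -- For large `|t|` the term `t • y i` dominates; otherwise a functional norming `u` nearly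
  -- annihilates it.
  rcases le_or_gt (2 * ‖u‖) (|t| * ε) with hbig | ht
  · have hty : |t| * ε ≤ ‖t • y i‖ := by
      rw [norm_smul, Real.norm_eq_abs]
      gcongr
    nlinarith [norm_le_add_norm_add' u (t • y i), mul_nonneg (sub_nonneg.2 hc.le) (norm_nonneg u)]
  · obtain ⟨g, hgT, hgu⟩ := hT u hu
    have hgy : |t * g (y i)| ≤ |t| * η := by
      rw [abs_mul]
      exact mul_le_mul_of_nonneg_left (hi g hgT).le (abs_nonneg t)
    have htη : |t| * η ≤ (1 - c) / 2 * ‖u‖ := by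
      have := mul_le_mul_of_nonneg_right ht.le (by linarith : 0 ≤ (1 - c) / 4)
      rw [hη_def]
      linarith
    calc c * ‖u‖ ≤ (1 + c) / 2 * ‖u‖ - |t| * η := by linarith
      _ ≤ g u + t * g (y i) := by linarith [neg_abs_le (t * g (y i))]
      _ = g (u + t • y i) := by simp
      _ ≤ ‖u + t • y i‖ := by
        simpa using (le_abs_self _).trans
          ((g.le_of_opNorm_le (hT_norm g hgT) (u + t • y i)).trans_eq' (Real.norm_eq_abs _).symm)

/-- Adding a multiple of `y (φ (k + 1))` to a vector of `G (φ k)` shrinks its norm at most by the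
factor `a (φ k + 1) / a (φ k)`; for antitone `a` these factors telescope along `φ`. -/
def IsMazurSubseq (y : ℕ → X) (G : ℕ → Submodule ℝ X) (a : ℕ → ℝ) (φ : ℕ → ℕ) : Prop :=
  ∀ k, ∀ u ∈ G (φ k), ∀ t : ℝ, a (φ k + 1) * ‖u‖ ≤ a (φ k) * ‖u + t • y (φ (k + 1))‖

namespace IsMazurSubseq

variable {y : ℕ → X} {G : ℕ → Submodule ℝ X} {a : ℕ → ℝ} {φ : ℕ → ℕ}

theorem mul_norm_le_of_mem_span_Ioc (h : IsMazurSubseq y G a φ) (hG : Monotone G)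
    (hyG : ∀ N, y N ∈ G N) (ha : Antitone a) (ha0 : ∀ N, 0 < a N) (hφ : StrictMono φ)
    {k m : ℕ} (hkm : k ≤ m) {u w : X} (hu : u ∈ G (φ k))
    (hw : w ∈ span ℝ ((y ∘ φ) '' Ioc k m)) :
    a (φ m) * ‖u‖ ≤ a (φ k) * ‖u + w‖ := by
  induction m, hkm using Nat.le_induction generalizing w with
  | base => simp_all
  | succ m hkm ih =>
    rw [show Ioc k (m + 1) = insert (m + 1) (Ioc k m) by ext; simp; omega, image_insert_eq,
      span_insert] at hw
    obtain ⟨_, hw₁, w', hw', rfl⟩ := mem_sup.1 hw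
    obtain ⟨t, rfl⟩ := mem_span_singleton.1 hw₁
    have huw' : u + w' ∈ G (φ m) := by
      refine add_mem (hG (hφ.monotone hkm) hu) (span_le.2 ?_ hw')
      rintro _ ⟨i, hi, rfl⟩
      exact hG (hφ.monotone hi.2) (hyG _)
    have hstep := h m (u + w') huw' t
    have hφm : a (φ (m + 1)) ≤ a (φ m + 1) := ha (hφ m.lt_succ_self)
    have hpos := ha0 (φ m + 1)
    refine le_of_mul_le_mul_left ?_ (ha0 (φ m))
    calc a (φ m) * (a (φ (m + 1)) * ‖u‖) ≤ a (φ m) * (a (φ m + 1) * ‖u‖) := by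
          gcongr; exact (ha0 _).le
      _ = a (φ m + 1) * (a (φ m) * ‖u‖) := by ring
      _ ≤ a (φ m + 1) * (a (φ k) * ‖u + w'‖) := mul_le_mul_of_nonneg_left (ih hw') hpos.le
      _ = a (φ k) * (a (φ m + 1) * ‖u + w'‖) := by ring
      _ ≤ a (φ k) * (a (φ m) * ‖u + w' + t • y (φ (m + 1))‖) := by
          gcongr; exact (ha0 _).le
      _ = a (φ m) * (a (φ k) * ‖u + (t • (y ∘ φ) (m + 1) + w')‖) := by
          rw [Function.comp_apply, add_comm (t • _) w', ← add_assoc]; ring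

theorem norm_le_two_mul_norm_add (h : IsMazurSubseq y G a φ) (hG : Monotone G)
    (hyG : ∀ N, y N ∈ G N) (ha : Antitone a) (ha1 : ∀ N, 1 ≤ a N) (ha2 : ∀ N, a N ≤ 2)
    (hφ : StrictMono φ) {k : ℕ} {u w : X} (hu : u ∈ G (φ k))
    (hw : w ∈ span ℝ ((y ∘ φ) '' Ioi k)) :
    ‖u‖ ≤ 2 * ‖u + w‖ := by
  have hmono : Monotone fun m => span ℝ ((y ∘ φ) '' Ioc k m) := fun _ _ hm =>
    span_mono (image_mono (Ioc_subset_Ioc_right hm))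
  rw [← iUnion_Ioc_right, image_iUnion, span_iUnion] at hw
  obtain ⟨m, hm⟩ := (mem_iSup_of_directed _ hmono.directed_le).1 hw
  have := h.mul_norm_le_of_mem_span_Ioc hG hyG ha (fun N => one_pos.trans_le (ha1 N)) hφ
    (le_max_left k m) hu (hmono (le_max_right k m) hm)
  nlinarith [ha1 (φ (max k m)), ha2 (φ k), norm_nonneg u, norm_nonneg (u + w)]

theorem norm_le_four_mul_norm_sub (h : IsMazurSubseq y G a φ) (hG : Monotone G)
    (hyG : ∀ N, y N ∈ G N) {l : X} (hlG : ∀ N, l ∈ G N) (ha : Antitone a)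
    (ha1 : ∀ N, 1 ≤ a N) (ha2 : ∀ N, a N ≤ 2) (hφ : StrictMono φ) (j : ℕ) {w : X}
    (hw : w ∈ span ℝ (insert l (range fun i => y (φ (2 * i))))) :
    ‖y (φ (2 * j + 1))‖ ≤ 4 * ‖y (φ (2 * j + 1)) - w‖ := by
  have hsplit : span ℝ (insert l (range fun i => y (φ (2 * i)))) ≤
      G (φ (2 * j)) ⊔ span ℝ ((y ∘ φ) '' Ioi (2 * j + 1)) := by
    rw [span_le]
    rintro _ (rfl | ⟨i, rfl⟩)
    · exact mem_sup_left (hlG _)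
    rcases le_or_gt i j with hij | hij
    · exact mem_sup_left (hG (hφ.monotone (by omega)) (hyG _))
    · exact mem_sup_right (subset_span ⟨2 * i, by simp only [mem_Ioi]; omega, rfl⟩)
  -- With `w = w₁ + w₂` split around `v`, the projection bound controls both `w₁` and `v - w₁`.
  obtain ⟨w₁, hw₁, w₂, hw₂, rfl⟩ := mem_sup.1 (hsplit hw)
  set v := y (φ (2 * j + 1))
  have h₁ : ‖-w₁‖ ≤ 2 * ‖-w₁ + (v - w₂)‖ :=
    h.norm_le_two_mul_norm_add hG hyG ha ha1 ha2 hφ (neg_mem hw₁)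
      (sub_mem (subset_span ⟨2 * j + 1, by simp, rfl⟩)
        (span_mono (image_mono (Ioi_subset_Ioi (by omega))) hw₂))
  have h₂ : ‖v - w₁‖ ≤ 2 * ‖v - w₁ + -w₂‖ :=
    h.norm_le_two_mul_norm_add hG hyG ha ha1 ha2 hφ
      (sub_mem (hyG _) (hG (hφ.monotone (by omega)) hw₁)) (neg_mem hw₂)
  rw [norm_neg, show -w₁ + (v - w₂) = v - (w₁ + w₂) by abel] at h₁
  rw [show v - w₁ + -w₂ = v - (w₁ + w₂) by abel] at h₂
  linarith [norm_sub_norm_le v w₁]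

end IsMazurSubseq

theorem exists_isMazurSubseq {y : ℕ → X} {G : ℕ → Submodule ℝ X}
    [∀ N, FiniteDimensional ℝ (G N)]
    (hy : ∀ g : StrongDual ℝ X, Tendsto (fun n => g (y n)) atTop (𝓝 0)) {ε : ℝ} (hε : 0 < ε)
    (hfreq : ∃ᶠ n in atTop, ε ≤ ‖y n‖) {a : ℕ → ℝ} (ha : StrictAnti a) (ha0 : ∀ N, 0 < a N) :
    ∃ φ : ℕ → ℕ, StrictMono φ ∧ (∀ k, ε ≤ ‖y (φ (k + 1))‖) ∧ IsMazurSubseq y G a φ := by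
  have hnext : ∀ N, ∃ n, N < n ∧ ε ≤ ‖y n‖ ∧
      ∀ u ∈ G N, ∀ t : ℝ, a (N + 1) * ‖u‖ ≤ a N * ‖u + t • y n‖ := by
    intro N
    have hc : a (N + 1) / a N < 1 := (div_lt_one (ha0 N)).2 (ha N.lt_succ_self)
    obtain ⟨n, hεn, hNn, hn⟩ := (hfreq.and_eventually ((eventually_gt_atTop N).and
      (eventually_mul_norm_le_norm_add_smul (G N) hy hε hc))).exists
    refine ⟨n, hNn, hεn, fun u hu t => ?_⟩
    have := hn hεn u hu t
    rwa [div_mul_eq_mul_div, div_le_iff₀' (ha0 N)] at this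
  choose next hlt hεnext hnext using hnext
  refine ⟨fun k => next^[k] 0, strictMono_nat_of_lt_succ fun k => ?_, fun k => ?_, fun k => ?_⟩ <;>
    simp only [Function.iterate_succ_apply']
  exacts [hlt _, hεnext _, hnext _]

theorem IsMazurSubseq.le_infDist_span_even {x : ℕ → X} {l : X} {G : ℕ → Submodule ℝ X}
    {a : ℕ → ℝ} {φ : ℕ → ℕ} (h : IsMazurSubseq (fun n => x n - l) G a φ) (hG : Monotone G)
    (hyG : ∀ N, x N - l ∈ G N) (hlG : ∀ N, l ∈ G N) (ha : Antitone a) (ha1 : ∀ N, 1 ≤ a N)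
    (ha2 : ∀ N, a N ≤ 2) (hφ : StrictMono φ) (j : ℕ) :
    ‖x (φ (2 * j + 1)) - l‖ ≤
      4 * infDist (x (φ (2 * j + 1))) (span ℝ (range fun i => x (φ (2 * i)))) := by
  rw [← div_le_iff₀' four_pos, le_infDist ⟨0, zero_mem _⟩]
  intro w hw
  have hspan : span ℝ (range fun i => x (φ (2 * i))) ≤
      span ℝ (insert l (range fun i => x (φ (2 * i)) - l)) := by
    rw [span_le]
    rintro _ ⟨i, rfl⟩
    have hl : l ∈ span ℝ (insert l (range fun i => x (φ (2 * i)) - l)) :=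
      subset_span (mem_insert _ _)
    have hy : x (φ (2 * i)) - l ∈ span ℝ (insert l (range fun i => x (φ (2 * i)) - l)) :=
      subset_span (mem_insert_of_mem l ⟨i, rfl⟩)
    simpa using add_mem hl hy
  have := h.norm_le_four_mul_norm_sub hG hyG hlG ha ha1 ha2 hφ j
    (sub_mem (hspan hw) (subset_span (mem_insert _ _)))
  rw [dist_eq_norm, div_le_iff₀' four_pos]
  rwa [show x (φ (2 * j + 1)) - l - (w - l) = x (φ (2 * j + 1)) - w by abel] at this

theorem exists_strictMono_le_infDist_span_even {x : ℕ → X} {l : X}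
    (hweak : ∀ f : StrongDual ℝ X, Tendsto (fun n => f (x n)) atTop (𝓝 (f l))) {ε : ℝ}
    (hε : 0 < ε) (hfreq : ∃ᶠ n in atTop, ε ≤ ‖x n - l‖) :
    ∃ φ : ℕ → ℕ, StrictMono φ ∧ ∀ j,
      ε ≤ 4 * infDist (x (φ (2 * j + 1))) (span ℝ (range fun i => x (φ (2 * i)))) := by
  let G (N : ℕ) : Submodule ℝ X := span ℝ (insert l ((fun n => x n - l) '' Iic N))
  have (N : ℕ) : FiniteDimensional ℝ (G N) :=
    FiniteDimensional.span_of_finite ℝ (((finite_Iic N).image _).insert l)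
  have hG : Monotone G := fun _ _ h =>
    span_mono (insert_subset_insert (image_mono (Iic_subset_Iic.2 h)))
  have ha : StrictAnti fun N : ℕ => (1 : ℝ) + 2⁻¹ ^ N := fun m n h => by
    simpa using pow_lt_pow_right_of_lt_one₀ (by norm_num : (0 : ℝ) < 2⁻¹) (by norm_num) h
  obtain ⟨φ, hφ, hεφ, hmazur⟩ := exists_isMazurSubseq (G := G)
    (fun g => by simpa using (hweak g).sub_const (g l)) hε hfreq ha fun N => by positivity
  refine ⟨φ, hφ, fun j => (hεφ (2 * j)).trans (hmazur.le_infDist_span_even hG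
    (fun N => subset_span (mem_insert_of_mem _ ⟨N, by simp, rfl⟩))
    (fun N => subset_span (mem_insert _ _)) ha.antitone (fun N => by simp) (fun N => ?_) hφ j)⟩
  linarith [pow_le_one₀ (n := N) (by norm_num : (0 : ℝ) ≤ 2⁻¹) (by norm_num)]

end

theorem stmt_16 {X : Type*} [NormedAddCommGroup X] [NormedSpace ℝ X]
    (x : ℕ → X)
    (haoc : ∀ M : Set ℕ, M.Infinite →
      FiniteDimensional ℝ (X ⧸ (Submodule.span ℝ (x '' M)).topologicalClosure))
    (l : X)
    (hweak : ∀ f : X →L[ℝ] ℝ, Tendsto (fun n => f (x n)) atTop (𝓝 (f l))) :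
    Tendsto x atTop (𝓝 l) := by
  by_contra hx
  obtain ⟨ε, hε, hfreq⟩ : ∃ ε > 0, ∃ᶠ n in atTop, ε ≤ ‖x n - l‖ := by
    simpa [Metric.tendsto_nhds, dist_eq_norm, frequently_atTop] using hx
  obtain ⟨φ, hφ, hfar⟩ := exists_strictMono_le_infDist_span_even hweak hε hfreq
  have hφ₂ : StrictMono fun i => φ (2 * i) := hφ.comp fun i j h => by omega
  have hφ₁ : StrictMono fun j => φ (2 * j + 1) := hφ.comp fun i j h => by omega
  have := haoc _ (infinite_range_of_injective hφ₂.injective)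
  rw [← range_comp, Function.comp_def] at this
  have hnear := tendsto_infDist_of_frequently_mem (isClosed_topologicalClosure _) hweak
    (frequently_atTop.2 fun N => ⟨φ (2 * N), hφ₂.id_le N,
      le_topologicalClosure _ (subset_span (mem_range_self N))⟩)
  obtain ⟨j, hj⟩ := ((hnear.comp hφ₁.tendsto_atTop).eventually
    (gt_mem_nhds (by positivity : 0 < ε / 4))).exists
  rw [Function.comp_apply, topologicalClosure_coe, infDist_closure] at hj
  linarith [hfar j]
end

section
/- Every bounded overcomplete sequence in a Banach space is relatively norm compact, and consequently an overcomplete set in a non-separable Banach space is never relatively norm compact. -/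
/-!
Suppose a bounded sequence `x` with dense span along every infinite subset is not relatively
compact. Then it has an `ε`-separated subsequence `y`. In the bidual, `y` has a weak-* ultralimit
`p`; the differences `y n - p` are weak-* null and bounded away from `0`, so Mazur's technique
extracts a subsequence `v k = y (σ k) - p` with basis constant `2`, in particular a minimal
sequence: no `v j` lies in the closed span of the others. Applying the hypothesis to the even
indices puts all of `X`, hence `p + v 1` and `p + v 3`, into the closed span of the `p + v k`,
`k` even, which lies in `ℝ ∙ p ⊔ closure (span {v k | k even})`. A one-dimensional enlargement
cannot absorb both `v 1` and `v 3`, contradicting minimality.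

For the second statement, a relatively compact set is separable, hence so is the closure of its
span; if that span is dense, `X` is separable and has countable density character.
-/

open Cardinal

open Set Filter Topology Metric Submodule

lemma exists_pairwise_le_dist_of_not_totallyBounded {α : Type*} [PseudoMetricSpace α]
    (x : ℕ → α) (h : ¬ TotallyBounded (range x)) :
    ∃ ε > 0, ∃ g : ℕ → ℕ, Pairwise fun i j => ε ≤ dist (x (g i)) (x (g j)) := by
  simp only [Metric.totallyBounded_iff, not_forall, not_exists, not_and] at h
  obtain ⟨ε, hε, h⟩ := h
  have hnext (s : Finset ℕ) : ∃ n, ∀ m ∈ s, ε ≤ dist (x m) (x n) := by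
    obtain ⟨_, ⟨n, rfl⟩, hn⟩ := not_subset.1 (h (x '' s) (s.finite_toSet.image x))
    simp only [mem_iUnion, mem_ball, exists_prop, mem_image, Finset.mem_coe] at hn
    exact ⟨n, fun m hm => not_lt.1 fun hlt => hn ⟨x m, ⟨m, hm, rfl⟩, by rwa [dist_comm]⟩⟩
  have : Std.Symm fun m n => ε ≤ dist (x m) (x n) := ⟨fun m n h => by rwa [dist_comm]⟩
  obtain ⟨g, -, hg⟩ := exists_seq_of_forall_finset_exists' (fun _ => True)
    (fun m n => ε ≤ dist (x m) (x n)) (fun s _ => (hnext s).imp fun _ hn => ⟨trivial, hn⟩)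
  exact ⟨ε, hε, g, hg⟩

lemma exists_seq_forall_image_Iio {α : Type*} (P : ℕ → Set α → α → Prop)
    (h : ∀ k (s : Set α), s.Finite → ∃ a, P k s a) :
    ∃ σ : ℕ → α, ∀ k, P k (σ '' Iio k) (σ k) := by
  choose next hnext using fun k (l : List α) => h k {a | a ∈ l} l.finite_toSet
  let hist : ℕ → List α := fun k => Nat.rec [] (fun k l => l ++ [next k l]) k
  have hist_eq (k : ℕ) : hist k = (List.range k).map fun i => next i (hist i) := by
    induction k with
    | zero => rfl
    | succ k ih => simp [hist, List.range_succ, ← ih]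
  refine ⟨fun k => next k (hist k), fun k => ?_⟩
  convert hnext k (hist k) using 2
  ext a
  simp [hist_eq k, eq_comm]

lemma exists_forall_tendsto_apply_of_isBounded {𝕜 W ι : Type*} [NontriviallyNormedField 𝕜]
    [ProperSpace 𝕜] [SeminormedAddCommGroup W] [NormedSpace 𝕜 W] (𝒰 : Ultrafilter ι)
    {y : ι → StrongDual 𝕜 W} (hy : Bornology.IsBounded (range y)) :
    ∃ p : StrongDual 𝕜 W, ∀ f, Tendsto (fun i => y i f) 𝒰 (𝓝 (p f)) := by
  obtain ⟨R, hR⟩ := isBounded_iff_forall_norm_le.1 hy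
  obtain ⟨p, -, hp⟩ := (WeakDual.isCompact_closedBall (0 : StrongDual 𝕜 W) R).ultrafilter_le_nhds
    (𝒰.map fun i => StrongDual.toWeakDual (y i))
    (le_principal_iff.2 (Ultrafilter.mem_map.2 (Filter.univ_mem' fun i => by
      simpa using hR _ ⟨i, rfl⟩)))
  exact ⟨WeakDual.toStrongDual p, fun f => ((WeakDual.eval_continuous f).tendsto p).comp hp⟩

lemma exists_finset_norming_of_isCompact {W : Type*} [NormedAddCommGroup W]
    [NormedSpace ℝ W] {K : Set (StrongDual ℝ W)} (hK : IsCompact K) {α : ℝ} (hα : 0 < α) :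
    ∃ G : Finset W, (∀ f ∈ G, ‖f‖ ≤ 1) ∧ ∀ z ∈ K, ∃ f ∈ G, ‖z‖ - α < z f := by
  have hcover : K ⊆ ⋃ f : closedBall (0 : W) 1, {z | ‖z‖ - α < z f.1} := by
    intro z _
    obtain ⟨f, hf, hzf⟩ := z.exists_lt_apply_of_lt_opNorm (sub_lt_self ‖z‖ hα)
    rcases le_or_gt 0 (z f) with h | h
    · exact mem_iUnion.2 ⟨⟨f, by simpa using hf.le⟩, by simpa [abs_of_nonneg h] using hzf⟩
    · refine mem_iUnion.2 ⟨⟨-f, by simpa using hf.le⟩, ?_⟩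
      simpa [abs_of_neg h] using hzf
  obtain ⟨t, ht⟩ := hK.elim_finite_subcover _ (fun f : closedBall (0 : W) 1 =>
    isOpen_lt (continuous_norm.sub continuous_const) (ContinuousLinearMap.apply ℝ ℝ f.1).continuous)
    hcover
  classical
  refine ⟨t.image Subtype.val, fun f hf => ?_, fun z hz => ?_⟩
  · obtain ⟨f, -, rfl⟩ := Finset.mem_image.1 hf
    exact mem_closedBall_zero_iff.1 f.2
  obtain ⟨f, hft, hzf⟩ := mem_iUnion₂.1 (ht hz)
  exact ⟨f, Finset.mem_image_of_mem _ hft, hzf⟩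

lemma le_norm_add_smul_of_almost_norming {E : Type*} [SeminormedAddCommGroup E]
    [NormedSpace ℝ E] {φ : StrongDual ℝ E} (hφ : ‖φ‖ ≤ 1) {w v : E} {α β : ℝ}
    (hα : 0 ≤ α) (hβ : 0 ≤ β) (hw : (1 - α) * ‖w‖ ≤ φ w) (hv : |φ v| ≤ β * ‖v‖) (t : ℝ) :
    (1 - α - 2 * β) * ‖w‖ ≤ ‖w + t • v‖ := by
  have hφu (u : E) : φ u ≤ ‖u‖ :=
    (le_abs_self _).trans ((φ.le_opNorm u).trans (mul_le_of_le_one_left (norm_nonneg u) hφ))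
  have htv : ‖t • v‖ ≤ ‖w + t • v‖ + ‖w‖ := by
    simpa using norm_sub_le (w + t • v) w
  rw [norm_smul, Real.norm_eq_abs] at htv
  rcases le_or_gt (2 * ‖w‖) (|t| * ‖v‖) with hbig | hsmall
  · nlinarith [norm_nonneg w]
  · have hφtv : |t * φ v| ≤ 2 * β * ‖w‖ := by
      rw [abs_mul]
      nlinarith [abs_nonneg t]
    have := hφu (w + t • v)
    simp only [map_add, map_smul, smul_eq_mul] at this
    linarith [neg_abs_le (t * φ v)]

lemma exists_finset_norming_of_finiteDimensional {W : Type*} [NormedAddCommGroup W]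
    [NormedSpace ℝ W] (F : Submodule ℝ (StrongDual ℝ W)) [FiniteDimensional ℝ F] {α : ℝ}
    (hα : 0 < α) : ∃ G : Finset W, (∀ f ∈ G, ‖f‖ ≤ 1) ∧ ∀ w ∈ F, ∃ f ∈ G, (1 - α) * ‖w‖ ≤ w f := by
  obtain ⟨G, hG1, hG⟩ := exists_finset_norming_of_isCompact
    ((isCompact_closedBall (0 : F) 1).image continuous_subtype_val) hα
  refine ⟨G, hG1, fun w hw => ?_⟩
  rcases eq_or_ne w 0 with rfl | hw0
  · obtain ⟨f, hf, -⟩ := hG 0 ⟨0, by simp, rfl⟩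
    exact ⟨f, hf, by simp⟩
  have hw_pos : 0 < ‖w‖ := norm_pos_iff.2 hw0
  have hunit : ‖w‖⁻¹ • (⟨w, hw⟩ : F) ∈ closedBall 0 1 :=
    mem_closedBall_zero_iff.2 (show ‖‖w‖⁻¹ • w‖ ≤ 1 by
      rw [norm_smul, norm_inv, norm_norm, inv_mul_cancel₀ hw_pos.ne'])
  obtain ⟨f, hf, hwf⟩ := hG (‖w‖⁻¹ • w) ⟨_, hunit, rfl⟩
  rw [norm_smul, norm_inv, norm_norm, inv_mul_cancel₀ hw_pos.ne', FunLike.coe_smul,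
    Pi.smul_apply, smul_eq_mul, lt_inv_mul_iff₀ hw_pos] at hwf
  exact ⟨f, hf, by linarith⟩

lemma exists_injective_forall_le_norm_add_smul {ι W : Type*} [NormedAddCommGroup W]
    [NormedSpace ℝ W] {u : ι → StrongDual ℝ W} {l : Filter ι} [l.NeBot] (hl : l ≤ cofinite)
    (hu : ∀ f, Tendsto (fun i => u i f) l (𝓝 0)) {δ : ℝ} (hδ : 0 < δ)
    (hδu : ∀ᶠ i in l, δ ≤ ‖u i‖) {θ : ℕ → ℝ} (hθ : ∀ k, 0 < θ k) :
    ∃ σ : ℕ → ι, Function.Injective σ ∧ (∀ k, δ ≤ ‖u (σ k)‖) ∧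
      ∀ k, ∀ w ∈ span ℝ ((fun i => u (σ i)) '' Iio k), ∀ t : ℝ,
        (1 - θ k) * ‖w‖ ≤ ‖w + t • u (σ k)‖ := by
  have hstep (k : ℕ) (s : Set ι) (hs : s.Finite) : ∃ a, a ∉ s ∧ δ ≤ ‖u a‖ ∧
      ∀ w ∈ span ℝ (u '' s), ∀ t : ℝ, (1 - θ k) * ‖w‖ ≤ ‖w + t • u a‖ := by
    have := FiniteDimensional.span_of_finite ℝ (hs.image u)
    obtain ⟨G, hG1, hG⟩ := exists_finset_norming_of_finiteDimensional (span ℝ (u '' s))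
      (half_pos (hθ k))
    have hsmall : ∀ᶠ i in l, ∀ f ∈ G, |u i f| < θ k / 4 * δ := (eventually_all_finset G).2
      fun f _ => by
        simpa using (hu f).eventually (eventually_abs_sub_lt 0 (by have := hθ k; positivity))
    have hfresh : ∀ᶠ i in l, i ∉ s := hl hs.compl_mem_cofinite
    obtain ⟨a, has, hδa, ha⟩ := (hfresh.and (hδu.and hsmall)).exists
    refine ⟨a, has, hδa, fun w hw t => ?_⟩
    obtain ⟨f, hfG, hwf⟩ := hG w hw
    have hvf : |u a f| ≤ θ k / 4 * ‖u a‖ :=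
      (ha f hfG).le.trans (mul_le_mul_of_nonneg_left hδa (by linarith [hθ k]))
    have := le_norm_add_smul_of_almost_norming (φ := NormedSpace.inclusionInDoubleDual ℝ _ f)
      ((NormedSpace.double_dual_bound ℝ _ f).trans (hG1 f hfG)) (half_pos (hθ k)).le
      (by linarith [hθ k] : 0 ≤ θ k / 4) (by simpa using hwf) (by simpa using hvf) t
    linarith
  obtain ⟨σ, hσ⟩ := exists_seq_forall_image_Iio _ fun k s hs => hstep k s hs
  refine ⟨σ, fun i j hij => ?_, fun k => (hσ k).2.1,
    fun k w hw t => (hσ k).2.2 w (by rwa [image_image]) t⟩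
  by_contra hne
  rcases lt_or_gt_of_ne hne with h | h
  · exact (hσ j).1 ⟨i, h, hij⟩
  · exact (hσ i).1 ⟨j, h, hij.symm⟩

section StepInequality

variable {E : Type*} [SeminormedAddCommGroup E] [NormedSpace ℝ E] {v : ℕ → E} {θ : ℕ → ℝ}

lemma one_sub_sum_mul_norm_le_norm_add (hθ : ∀ k, 0 ≤ θ k ∧ θ k ≤ 1)
    (hstep : ∀ k, ∀ w ∈ span ℝ (v '' Iio k), ∀ t : ℝ, (1 - θ k) * ‖w‖ ≤ ‖w + t • v k‖)
    {m n : ℕ} (hmn : m ≤ n) {w w' : E} (hw : w ∈ span ℝ (v '' Iio m))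
    (hw' : w' ∈ span ℝ (v '' Ico m n)) :
    (1 - ∑ i ∈ Finset.Ico m n, θ i) * ‖w‖ ≤ ‖w + w'‖ := by
  induction n, hmn using Nat.le_induction generalizing w' with
  | base => simp_all
  | succ n hmn ih =>
    rw [← insert_Ico_right_eq_Ico_add_one hmn, image_insert_eq, mem_span_insert] at hw'
    obtain ⟨t, w'', hw'', rfl⟩ := hw'
    have hsub : w + w'' ∈ span ℝ (v '' Iio n) := add_mem
      (span_mono (image_mono (Iio_subset_Iio hmn)) hw)
      (span_mono (image_mono Ico_subset_Iio_self) hw'')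
    have h1 := hstep n _ hsub t
    have h2 := ih hw''
    have hS : 0 ≤ ∑ i ∈ Finset.Ico m n, θ i := Finset.sum_nonneg fun i _ => (hθ i).1
    rw [Finset.sum_Ico_succ_top hmn, show w + (t • v n + w'') = w + w'' + t • v n by abel]
    nlinarith [mul_le_mul_of_nonneg_left h2 (sub_nonneg.2 (hθ n).2),
      mul_nonneg (hθ n).1 (mul_nonneg hS (norm_nonneg w))]

lemma norm_le_two_mul_norm_add_of_tsum_le_half (hθ0 : ∀ k, 0 ≤ θ k) (hθ : Summable θ)
    (hθ_le : ∑' k, θ k ≤ 1 / 2)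
    (hstep : ∀ k, ∀ w ∈ span ℝ (v '' Iio k), ∀ t : ℝ, (1 - θ k) * ‖w‖ ≤ ‖w + t • v k‖)
    {m : ℕ} {w w' : E} (hw : w ∈ span ℝ (v '' Iio m)) (hw' : w' ∈ span ℝ (v '' Ici m)) :
    ‖w‖ ≤ 2 * ‖w + w'‖ := by
  have hθ1 (k : ℕ) : θ k ≤ 1 := (hθ.le_tsum k fun j _ => hθ0 j).trans (by linarith)
  have hmono : Monotone fun n => span ℝ (v '' Ico m n) :=
    fun n n' h => span_mono (image_mono (Ico_subset_Ico_right h))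
  rw [← iUnion_Ico_right, image_iUnion, span_iUnion, mem_iSup_of_directed _ hmono.directed_le]
    at hw'
  obtain ⟨n, hn⟩ := hw'
  rcases le_total m n with hmn | hnm
  · have := one_sub_sum_mul_norm_le_norm_add (fun k => ⟨hθ0 k, hθ1 k⟩) hstep hmn hw hn
    have hsum := hθ.sum_le_tsum (Finset.Ico m n) fun k _ => hθ0 k
    nlinarith [norm_nonneg w]
  · obtain rfl : w' = 0 := by simpa [Ico_eq_empty_of_le hnm] using hn
    simpa using le_mul_of_one_le_left (norm_nonneg w) one_le_two

end StepInequality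

/-- A minimal sequence (minimal system) in the sense of Banach space theory. -/
def IsMinimalSeq {E : Type*} [SeminormedAddCommGroup E] [NormedSpace ℝ E] (v : ℕ → E) : Prop :=
  ∀ j, v j ∉ (span ℝ (v '' {j}ᶜ)).topologicalClosure

section Minimal

variable {E : Type*} [NormedAddCommGroup E] [NormedSpace ℝ E] {v : ℕ → E}

lemma IsMinimalSeq.notMem_topologicalClosure (hv : IsMinimalSeq v) {A : Set ℕ} {j : ℕ}
    (hj : j ∉ A) : v j ∉ (span ℝ (v '' A)).topologicalClosure := fun h =>
  hv j (topologicalClosure_mono (span_mono (image_mono (subset_compl_singleton_iff.2 hj))) h)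

lemma isMinimalSeq_of_norm_le_mul_norm_add (hv : ∀ j, v j ≠ 0) {C : ℝ}
    (hC : ∀ m, ∀ w ∈ span ℝ (v '' Iio m), ∀ w' ∈ span ℝ (v '' Ici m), ‖w‖ ≤ C * ‖w + w'‖) :
    IsMinimalSeq v := by
  intro j hj
  have hbound : (span ℝ (v '' {j}ᶜ) : Set E) ⊆ {w | ‖v j‖ ≤ 2 * C * ‖v j - w‖} := by
    intro w hw
    rw [← Iio_union_Ioi, image_union, span_union, SetLike.mem_coe, Submodule.mem_sup] at hw
    obtain ⟨w₁, hw₁, w₂, hw₂, rfl⟩ := hw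
    have h₁ := hC j (-w₁) (neg_mem hw₁) (v j - w₂) (sub_mem (subset_span ⟨j, self_mem_Ici, rfl⟩)
      (span_mono (image_mono Ioi_subset_Ici_self) hw₂))
    have h₂ := hC (j + 1) (v j - w₁)
      (sub_mem (subset_span ⟨j, Nat.lt_succ_self j, rfl⟩)
        (span_mono (image_mono (Iio_subset_Iio (Nat.le_succ j))) hw₁))
      (-w₂) (neg_mem (span_mono (image_mono fun i (hi : j < i) => hi) hw₂))
    rw [norm_neg, show -w₁ + (v j - w₂) = v j - (w₁ + w₂) by abel] at h₁
    rw [show v j - w₁ + -w₂ = v j - (w₁ + w₂) by abel] at h₂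
    have := norm_le_norm_sub_add (v j) w₁
    show ‖v j‖ ≤ 2 * C * ‖v j - (w₁ + w₂)‖
    linarith
  have hclosed : IsClosed {w | ‖v j‖ ≤ 2 * C * ‖v j - w‖} :=
    isClosed_le continuous_const (continuous_const.mul (continuous_const.sub continuous_id).norm)
  have h0 : ‖v j‖ ≤ 2 * C * ‖v j - v j‖ := closure_minimal hbound hclosed hj
  rw [sub_self, norm_zero, mul_zero, norm_le_zero_iff] at h0
  exact hv j h0

/-- Translating a minimal sequence by `p` enlarges closed spans by at most the line `ℝ ∙ p`, so
at most one index outside `A` can be recovered from the translates indexed by `A`. -/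
lemma IsMinimalSeq.false_of_add_mem_topologicalClosure (hv : IsMinimalSeq v) (p : E)
    {A : Set ℕ} {i j : ℕ} (hi : i ∉ A) (hj : j ∉ A) (hij : j ≠ i)
    (hpi : p + v i ∈ (span ℝ ((fun k => p + v k) '' A)).topologicalClosure)
    (hpj : p + v j ∈ (span ℝ ((fun k => p + v k) '' A)).topologicalClosure) : False := by
  set K := (span ℝ (v '' A)).topologicalClosure
  have hclosed : IsClosed (span ℝ (insert p (K : Set E)) : Set E) := by
    rw [span_insert, span_eq, sup_comm]
    exact isClosed_sup_finiteDimensional _ _ (span ℝ (v '' A)).isClosed_topologicalClosure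
  have hle :
      (span ℝ ((fun k => p + v k) '' A)).topologicalClosure ≤ span ℝ (insert p (K : Set E)) :=
    topologicalClosure_minimal _ (span_le.2 <| by
      rintro _ ⟨k, hk, rfl⟩
      exact add_mem (subset_span (mem_insert p _)) (subset_span (mem_insert_of_mem p
        (le_topologicalClosure _ (subset_span ⟨k, hk, rfl⟩))))) hclosed
  have hsub {k : ℕ} (hk : p + v k ∈ (span ℝ ((fun k => p + v k) '' A)).topologicalClosure) :
      v k ∈ span ℝ (insert p (K : Set E)) := by
    simpa using sub_mem (hle hk) (subset_span (mem_insert p _))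
  have hp : p ∈ span ℝ (insert (v i) (K : Set E)) :=
    mem_span_insert_exchange (hsub hpi) (by rw [span_eq]; exact hv.notMem_topologicalClosure hi)
  have hK : span ℝ (insert (v i) (K : Set E)) ≤ (span ℝ (v '' insert i A)).topologicalClosure := by
    rw [span_insert, span_eq, image_insert_eq]
    refine sup_le ?_ (topologicalClosure_mono (span_mono (subset_insert _ _)))
    rw [span_singleton_le_iff_mem]
    exact le_topologicalClosure _ (subset_span (mem_insert _ _))
  refine hv.notMem_topologicalClosure (A := insert i A) (j := j) (by simp [hij, hj]) (hK ?_)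
  exact span_le.2 (insert_subset hp ((subset_insert _ _).trans subset_span)) (hsub hpj)

end Minimal

lemma ContinuousLinearMap.apply_mem_topologicalClosure_span_image {X E : Type*}
    [SeminormedAddCommGroup X] [NormedSpace ℝ X] [SeminormedAddCommGroup E] [NormedSpace ℝ E]
    (T : X →L[ℝ] E) {s : Set X} (hs : Dense (span ℝ s : Set X)) (x : X) :
    T x ∈ (span ℝ (T '' s)).topologicalClosure := by
  have h := topologicalClosure_map T (span ℝ s)
  rw [dense_iff_topologicalClosure_eq_top.1 hs, ← span_image] at h
  exact h ⟨x, trivial, rfl⟩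

lemma exists_injective_isMinimalSeq_sub_of_separated {W : Type*} [NormedAddCommGroup W]
    [NormedSpace ℝ W] {y : ℕ → StrongDual ℝ W} (hy : Bornology.IsBounded (range y)) {ε : ℝ}
    (hε : 0 < ε) (hsep : Pairwise fun i j => ε ≤ ‖y i - y j‖) :
    ∃ p : StrongDual ℝ W, ∃ σ : ℕ → ℕ,
      Function.Injective σ ∧ IsMinimalSeq fun k => y (σ k) - p := by
  obtain ⟨p, hp⟩ := exists_forall_tendsto_apply_of_isBounded (hyperfilter ℕ) hy
  have hu (f : W) : Tendsto (fun n => (y n - p) f) (hyperfilter ℕ) (𝓝 0) := by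
    simpa using (hp f).sub_const (p f)
  have hfar : ∀ᶠ n in hyperfilter ℕ, ε / 2 ≤ ‖y n - p‖ := by
    refine hyperfilter_le_cofinite (eventually_cofinite.2 (Subsingleton.finite fun n hn m hm => ?_))
    by_contra hnm
    have := (hsep hnm).trans (norm_sub_le_norm_sub_add_norm_sub (y n) p (y m))
    rw [norm_sub_rev p] at this
    linarith [not_le.1 hn, not_le.1 hm]
  -- `∑ θ k = 1 / 2`, which gives basis constant `2`
  obtain ⟨σ, hσ, hσfar, hstep⟩ := exists_injective_forall_le_norm_add_smul hyperfilter_le_cofinite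
    hu (half_pos hε) hfar (θ := fun k => 1 / 2 / 2 / 2 ^ k) (fun k => by positivity)
  refine ⟨p, σ, hσ, isMinimalSeq_of_norm_le_mul_norm_add (C := 2)
    (fun k => norm_pos_iff.1 ((half_pos hε).trans_le (hσfar k))) fun m w hw w' hw' => ?_⟩
  exact norm_le_two_mul_norm_add_of_tsum_le_half (fun k => by positivity)
    (summable_geometric_two' _) (tsum_geometric_two' _).le hstep hw hw'

theorem isCompact_closure_range_of_forall_infinite_dense_span {X : Type*} [NormedAddCommGroup X]
    [NormedSpace ℝ X] [CompleteSpace X] (x : ℕ → X)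
    (hb : Bornology.IsBounded (range x))
    (hd : ∀ M : Set ℕ, M.Infinite → Dense (span ℝ (x '' M) : Set X)) :
    IsCompact (closure (range x)) := by
  refine (TotallyBounded.closure ?_).isCompact_of_isClosed isClosed_closure
  by_contra h
  obtain ⟨ε, hε, g, hg⟩ := exists_pairwise_le_dist_of_not_totallyBounded x h
  have hg_inj : Function.Injective g := fun i j hij => by
    by_contra hne
    have : ε ≤ dist (x (g i)) (x (g j)) := hg hne
    rw [hij, dist_self] at this
    linarith
  set J := NormedSpace.inclusionInDoubleDual ℝ X
  have hJ (a : X) : ‖J a‖ = ‖a‖ := (NormedSpace.inclusionInDoubleDualLi ℝ).norm_map a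
  obtain ⟨R, hR⟩ := isBounded_iff_forall_norm_le.1 hb
  obtain ⟨p, σ, hσ, hv⟩ := exists_injective_isMinimalSeq_sub_of_separated
    (y := fun n => J (x (g n))) (isBounded_iff_forall_norm_le.2 ⟨R, by
      rintro _ ⟨n, rfl⟩
      exact (hJ _).trans_le (hR _ ⟨g n, rfl⟩)⟩) hε fun i j hij => by
    have : ε ≤ dist (x (g i)) (x (g j)) := hg hij
    rwa [dist_eq_norm, ← hJ, J.map_sub] at this
  set Ev : Set ℕ := range (2 * ·)
  have hEv : ((g ∘ σ) '' Ev).Infinite := (infinite_range_of_injective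
    (mul_right_injective₀ two_ne_zero)).image (hg_inj.comp hσ).injOn
  have hmem (k : ℕ) : p + (J (x (g (σ k))) - p) ∈
      (span ℝ ((fun k => p + (J (x (g (σ k))) - p)) '' Ev)).topologicalClosure := by
    have := ContinuousLinearMap.apply_mem_topologicalClosure_span_image
      (E := StrongDual ℝ (StrongDual ℝ X)) J (hd _ hEv) (x (g (σ k)))
    rw [image_image, image_image] at this
    simp only [add_sub_cancel]
    exact this
  refine hv.false_of_add_mem_topologicalClosure p (i := 1) (j := 3) ?_ ?_ (by norm_num)
    (hmem 1) (hmem 3)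
  · rintro ⟨n, hn⟩
    simp only at hn
    omega
  · rintro ⟨n, hn⟩
    simp only at hn
    omega

lemma densityChar_le_aleph0_s18 (X : Type*) [TopologicalSpace X]
    [TopologicalSpace.SeparableSpace X] : densityChar X ≤ ℵ₀ := by
  obtain ⟨t, htc, htd⟩ := TopologicalSpace.exists_countable_dense X
  have : densityChar X ≤ #t := csInf_le' ⟨t, htd, rfl⟩
  exact this.trans htc.le_aleph0

theorem not_isCompact_closure_of_dense_span {X : Type*} [NormedAddCommGroup X] [NormedSpace ℝ X]
    (hX : ℵ₀ < densityChar X) {S : Set X} (hS : Dense (span ℝ S : Set X)) :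
    ¬ IsCompact (closure S) := by
  intro hK
  have hsep := ((hK.isSeparable.mono subset_closure).span (R := ℝ)).closure
  rw [hS.closure_eq, TopologicalSpace.isSeparable_univ_iff] at hsep
  exact (densityChar_le_aleph0_s18 X).not_gt hX

theorem stmt_18 {X : Type*} [NormedAddCommGroup X] [NormedSpace ℝ X] [CompleteSpace X] :
    (∀ x : ℕ → X, Bornology.IsBounded (Set.range x) →
      (∀ M : Set ℕ, M.Infinite → Dense (Submodule.span ℝ (x '' M) : Set X)) →
      IsCompact (closure (Set.range x))) ∧
    (Cardinal.aleph0 < densityChar X →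
      ∀ S : Set X, #S = densityChar X →
        (∀ Λ : Set X, Λ ⊆ S → #Λ = #S → Dense (Submodule.span ℝ Λ : Set X)) →
        ¬ IsCompact (closure S)) :=
  ⟨isCompact_closure_range_of_forall_infinite_dense_span, fun hX S _ hS =>
    not_isCompact_closure_of_dense_span hX (hS S subset_rfl rfl)⟩
end

section
/- Let X be a normed space whose completion X̂ strictly contains X (i.e., X is incomplete), let (x_n)_{n<ω} be a normalized linearly dense sequence in X, let y ∈ X̂ ∖ X, and let (y_k)_{k<ω} ⊆ X satisfy ‖y_k − y‖ < 1/k!. Define g_k = y_k + ∑_{n=0}^{k} (n+2)^{−k} x_n ∈ X. Then (g_k)_{k<ω} converges to y in X̂, is bounded and not relatively compact in X, and every subsequence of (g_k) has dense linear span in X; in particular every separable incomplete normed space contains a bounded overcomplete sequence that is not relatively compact. -/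
/-!
Since `‖y_k - y‖ < 1/k!` and the perturbation `∑_{n ≤ k} (n+2)^{-k} x_n` has norm at most
`(k+1)/2^k`, the `g_k` converge in the completion to `y ∉ X`; hence they are bounded and the closure
of their range in `X` is not compact. If a functional `f` vanishes on `g_k` for infinitely many `k`,
its extension to the completion vanishes at `y`, so `|f(y_k)| ≤ ‖f‖/k!`. Multiplying `f(g_k) = 0` by
`(j+2)^k` and letting `k → ∞`, the factorial kills the `y_k` term and the weights
`((j+2)/(n+2))^k` with `n > j` kill the tail, so inductively `f(x_j) = 0` for all `j`, and `f = 0`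
by the density of the span of the `x_n`; Hahn–Banach turns this into density of the span.
-/

open Filter Topology UniformSpace Finset

lemma norm_sum_range_inv_pow_smul_le {E : Type*} [SeminormedAddCommGroup E] [NormedSpace ℝ E]
    {x : ℕ → E} (hx : ∀ n, ‖x n‖ ≤ 1) (k : ℕ) :
    ‖∑ n ∈ range (k + 1), (((n : ℝ) + 2) ^ k)⁻¹ • x n‖ ≤ ((k : ℝ) + 1) / 2 ^ k := by
  calc ‖∑ n ∈ range (k + 1), (((n : ℝ) + 2) ^ k)⁻¹ • x n‖
      ≤ ∑ n ∈ range (k + 1), ‖(((n : ℝ) + 2) ^ k)⁻¹ • x n‖ := norm_sum_le _ _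
    _ ≤ ∑ _n ∈ range (k + 1), ((2 : ℝ) ^ k)⁻¹ := by
        refine sum_le_sum fun n _ => ?_
        rw [norm_smul, norm_inv, norm_pow, Real.norm_of_nonneg (by positivity)]
        calc (((n : ℝ) + 2) ^ k)⁻¹ * ‖x n‖ ≤ (((n : ℝ) + 2) ^ k)⁻¹ :=
              mul_le_of_le_one_right (by positivity) (hx n)
          _ ≤ ((2 : ℝ) ^ k)⁻¹ := by gcongr; linarith [n.cast_nonneg (α := ℝ)]
    _ = ((k : ℝ) + 1) / 2 ^ k := by simp [div_eq_mul_inv]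

lemma tendsto_succ_div_two_pow : Tendsto (fun k : ℕ => ((k : ℝ) + 1) / 2 ^ k) atTop (𝓝 0) := by
  have hk := tendsto_pow_const_div_const_pow_of_one_lt 1 one_lt_two
  have h1 := tendsto_pow_const_div_const_pow_of_one_lt 0 one_lt_two
  simpa [add_div] using hk.add h1

lemma tendsto_coe_add_sum_range_inv_pow_smul {E : Type*} [SeminormedAddCommGroup E]
    [NormedSpace ℝ E] {x : ℕ → E} (hx : ∀ n, ‖x n‖ ≤ 1) {y : Completion E} {yk : ℕ → E}
    (hyk : ∀ k, ‖(yk k : Completion E) - y‖ < 1 / k.factorial) :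
    Tendsto (fun k => ((yk k + ∑ n ∈ range (k + 1), (((n : ℝ) + 2) ^ k)⁻¹ • x n : E) :
      Completion E)) atTop (𝓝 y) := by
  rw [tendsto_iff_norm_sub_tendsto_zero]
  have hfact : Tendsto (fun k : ℕ => 1 / (k.factorial : ℝ)) atTop (𝓝 0) := by
    simpa using FloorSemiring.tendsto_pow_div_factorial_atTop (1 : ℝ)
  refine squeeze_zero (fun _ => norm_nonneg _) (fun k => ?_)
    (add_zero (0 : ℝ) ▸ hfact.add tendsto_succ_div_two_pow)
  rw [Completion.coe_add, add_sub_right_comm]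
  refine (norm_add_le _ _).trans (add_le_add (hyk k).le ?_)
  rw [Completion.norm_coe]
  exact norm_sum_range_inv_pow_smul_le hx k

lemma isBounded_range_of_tendsto_coe_completion {α : Type*} [PseudoMetricSpace α] {u : ℕ → α}
    {y : Completion α} (hu : Tendsto (fun k => (u k : Completion α)) atTop (𝓝 y)) :
    Bornology.IsBounded (Set.range u) := by
  refine (Completion.coe_isometry.antilipschitz.isBounded_preimage
    (Metric.isBounded_range_of_tendsto _ hu)).subset ?_
  rintro _ ⟨k, rfl⟩
  exact ⟨k, rfl⟩

lemma not_isCompact_closure_range_of_tendsto_coe_completion {α : Type*} [UniformSpace α]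
    {u : ℕ → α} {y : Completion α} (hu : Tendsto (fun k => (u k : Completion α)) atTop (𝓝 y))
    (hy : y ∉ Set.range ((↑) : α → Completion α)) : ¬ IsCompact (closure (Set.range u)) := by
  intro hc
  have hK := (hc.image (Completion.continuous_coe α)).isClosed.mem_of_tendsto hu
    (Eventually.of_forall fun k => Set.mem_image_of_mem _ (subset_closure ⟨k, rfl⟩))
  obtain ⟨a, -, rfl⟩ := hK
  exact hy ⟨a, rfl⟩

lemma abs_le_of_add_sum_range_inv_pow_mul_eq_zero {a : ℕ → ℝ} {b B C : ℝ} {j k : ℕ}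
    (hjk : j ≤ k) (ha : ∀ n, |a n| ≤ B) (hlow : ∀ n < j, a n = 0) (hb : |b| ≤ C / k.factorial)
    (h : b + ∑ n ∈ range (k + 1), (((n : ℝ) + 2) ^ k)⁻¹ * a n = 0) :
    |a j| ≤ C * (((j : ℝ) + 2) ^ k / k.factorial) +
      B * (k * (((j : ℝ) + 2) / ((j : ℝ) + 3)) ^ k) := by
  have hB : 0 ≤ B := (abs_nonneg _).trans (ha 0)
  set tail := ∑ n ∈ Ico (j + 1) (k + 1), (((n : ℝ) + 2) ^ k)⁻¹ * a n
  have hsplit : ∑ n ∈ range (k + 1), (((n : ℝ) + 2) ^ k)⁻¹ * a n =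
      (((j : ℝ) + 2) ^ k)⁻¹ * a j + tail := by
    rw [range_eq_Ico, ← sum_Ico_consecutive _ (Nat.zero_le j) (by omega : j ≤ k + 1),
      sum_eq_sum_Ico_succ_bot (by omega : j < k + 1),
      sum_eq_zero fun n hn => by rw [hlow n (mem_Ico.1 hn).2, mul_zero], zero_add]
  have htail : |tail| ≤ k * ((((j : ℝ) + 3) ^ k)⁻¹ * B) := by
    calc |tail| ≤ ∑ n ∈ Ico (j + 1) (k + 1), |(((n : ℝ) + 2) ^ k)⁻¹ * a n| :=
          abs_sum_le_sum_abs _ _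
      _ ≤ ∑ _n ∈ Ico (j + 1) (k + 1), (((j : ℝ) + 3) ^ k)⁻¹ * B := by
          refine sum_le_sum fun n hn => ?_
          have hjn : (j : ℝ) + 1 ≤ n := by exact_mod_cast (mem_Ico.1 hn).1
          rw [abs_mul, abs_of_pos (by positivity)]
          have hpow : (((n : ℝ) + 2) ^ k)⁻¹ ≤ (((j : ℝ) + 3) ^ k)⁻¹ :=
            inv_anti₀ (by positivity) (pow_le_pow_left₀ (by positivity) (by linarith) k)
          exact mul_le_mul hpow (ha n) (abs_nonneg _) (by positivity)
      _ ≤ k * ((((j : ℝ) + 3) ^ k)⁻¹ * B) := by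
          rw [sum_const, Nat.card_Ico, nsmul_eq_mul]
          gcongr
          exact_mod_cast (by omega : k + 1 - (j + 1) ≤ k)
  have hr : (0 : ℝ) < ((j : ℝ) + 2) ^ k := by positivity
  have haj : a j = ((j : ℝ) + 2) ^ k * -(b + tail) := by
    rw [← mul_inv_cancel_left₀ hr.ne' (a j)]
    congr 1
    linarith
  calc |a j| = ((j : ℝ) + 2) ^ k * |b + tail| := by rw [haj, abs_mul, abs_neg, abs_of_pos hr]
    _ ≤ ((j : ℝ) + 2) ^ k * (C / k.factorial + k * ((((j : ℝ) + 3) ^ k)⁻¹ * B)) := by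
        gcongr
        exact (abs_add_le _ _).trans (add_le_add hb htail)
    _ = _ := by rw [div_pow]; field_simp

lemma eq_zero_of_frequently_add_sum_range_inv_pow_mul_eq_zero {a b : ℕ → ℝ} {B C : ℝ}
    (ha : ∀ n, |a n| ≤ B) (hb : ∀ k, |b k| ≤ C / k.factorial)
    (h : ∃ᶠ k in atTop, b k + ∑ n ∈ range (k + 1), (((n : ℝ) + 2) ^ k)⁻¹ * a n = 0) :
    a = 0 := by
  funext j
  induction j using Nat.strong_induction_on with
  | _ j ih =>
    have hq : ((j : ℝ) + 2) / ((j : ℝ) + 3) < 1 := by rw [div_lt_one (by positivity)]; linarith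
    have hbound : Tendsto (fun k : ℕ => C * (((j : ℝ) + 2) ^ k / k.factorial) +
        B * (k * (((j : ℝ) + 2) / ((j : ℝ) + 3)) ^ k)) atTop (𝓝 0) := by
      simpa using ((FloorSemiring.tendsto_pow_div_factorial_atTop ((j : ℝ) + 2)).const_mul C).add
        ((tendsto_self_mul_const_pow_of_lt_one (by positivity) hq).const_mul B)
    refine abs_nonpos_iff.1 (ge_of_tendsto_of_frequently hbound ?_)
    refine (h.and_eventually (eventually_ge_atTop j)).mono fun k ⟨hk, hjk⟩ => ?_
    exact abs_le_of_add_sum_range_inv_pow_mul_eq_zero hjk ha ih (hb k) hk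

lemma Submodule.dense_of_forall_strongDual_eq_zero {E : Type*} [AddCommGroup E]
    [TopologicalSpace E] [IsTopologicalAddGroup E] [Module ℝ E] [ContinuousSMul ℝ E]
    [LocallyConvexSpace ℝ E] (s : Submodule ℝ E)
    (h : ∀ f : StrongDual ℝ E, (∀ z ∈ s, f z = 0) → f = 0) : Dense (s : Set E) := by
  intro v
  by_contra hv
  obtain ⟨f, u, hfu, hufv⟩ :=
    geometric_hahn_banach_closed_point s.convex.closure isClosed_closure hv
  have hu : 0 < u := by simpa using hfu 0 (subset_closure s.zero_mem)
  -- a functional bounded above on a subspace vanishes there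
  have hfs : ∀ z ∈ s, f z = 0 := by
    intro z hz
    by_contra hz0
    have := hfu ((u / f z) • z) (subset_closure (s.smul_mem _ hz))
    rw [map_smul, smul_eq_mul, div_mul_cancel₀ _ hz0] at this
    exact lt_irrefl _ this
  simp [h f hfs] at hufv
  linarith

lemma ContinuousLinearMap.extend_toComplL_coe {𝕜 E F : Type*} [NontriviallyNormedField 𝕜]
    [NormedAddCommGroup E] [NormedSpace 𝕜 E] [NormedAddCommGroup F] [NormedSpace 𝕜 F]
    [CompleteSpace F] (f : E →L[𝕜] F) (z : E) :
    f.extend (Completion.toComplL : E →L[𝕜] Completion E) z = f z := by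
  simpa using f.extend_eq (e := (Completion.toComplL : E →L[𝕜] Completion E))
    (by simpa using Completion.denseRange_coe)
    (by simpa using Completion.isUniformInducing_coe E) z

lemma dense_span_image_of_infinite {X : Type*} [NormedAddCommGroup X] [NormedSpace ℝ X]
    {x : ℕ → X} (hx : ∀ n, ‖x n‖ ≤ 1)
    (hxdense : Dense (Submodule.span ℝ (Set.range x) : Set X))
    {y : Completion X} {yk : ℕ → X} (hyk : ∀ k, ‖(yk k : Completion X) - y‖ < 1 / k.factorial)
    {g : ℕ → X} (hg : ∀ k, g k = yk k + ∑ n ∈ range (k + 1), (((n : ℝ) + 2) ^ k)⁻¹ • x n)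
    {M : Set ℕ} (hM : M.Infinite) : Dense (Submodule.span ℝ (g '' M) : Set X) := by
  refine Submodule.dense_of_forall_strongDual_eq_zero _ fun f hf => ?_
  have hfg : ∃ᶠ k in atTop, f (g k) = 0 :=
    Nat.frequently_atTop_iff_infinite.2 (hM.mono fun k hk =>
      hf _ (Submodule.subset_span ⟨k, hk, rfl⟩))
  set F := f.extend (Completion.toComplL : X →L[ℝ] Completion X)
  have hgy : Tendsto (fun k => (g k : Completion X)) atTop (𝓝 y) := by
    simpa only [hg] using tendsto_coe_add_sum_range_inv_pow_smul hx hyk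
  have hFy : F y = 0 :=
    tendsto_nhds_unique_of_frequently_eq ((F.continuous.tendsto y).comp hgy) tendsto_const_nhds
      (hfg.mono fun k hk => by simpa [F, f.extend_toComplL_coe] using hk)
  have hfx : (fun n => f (x n)) = 0 := by
    refine eq_zero_of_frequently_add_sum_range_inv_pow_mul_eq_zero (B := ‖f‖) (C := ‖F‖)
      (b := fun k => f (yk k)) (fun n => ?_) (fun k => ?_) (hfg.mono fun k hk => ?_)
    · rw [← Real.norm_eq_abs]
      exact f.le_opNorm_of_le (hx n) |>.trans_eq (mul_one _)
    · rw [← Real.norm_eq_abs, ← f.extend_toComplL_coe, ← sub_zero (F _), ← hFy, ← map_sub,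
        ← mul_one_div]
      exact (F.le_opNorm _).trans (by gcongr; exact (hyk k).le)
    · simpa [hg k] using hk
  exact ContinuousLinearMap.ext_on hxdense fun _ ⟨n, hn⟩ => hn ▸ congrFun hfx n

lemma exists_norm_eq_one_dense_span (Z : Type*) [NormedAddCommGroup Z] [NormedSpace ℝ Z]
    [TopologicalSpace.SeparableSpace Z] [Nontrivial Z] :
    ∃ x : ℕ → Z, (∀ n, ‖x n‖ = 1) ∧ Dense (Submodule.span ℝ (Set.range x) : Set Z) := by
  classical
  obtain ⟨d, hd⟩ := TopologicalSpace.exists_dense_seq Z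
  obtain ⟨e, he⟩ := exists_norm_eq Z zero_le_one
  refine ⟨fun n => if d n = 0 then e else NormedSpace.normalize (d n), fun n => ?_,
    hd.mono ?_⟩
  · dsimp only
    split_ifs with h
    · exact he
    · exact NormedSpace.norm_normalize_eq_one_iff.2 h
  · rintro _ ⟨n, rfl⟩
    by_cases h : d n = 0
    · simp [h]
    · rw [← NormedSpace.norm_smul_normalize (d n)]
      exact Submodule.smul_mem _ _ (Submodule.subset_span ⟨n, if_neg h⟩)

lemma UniformSpace.Completion.exists_notMem_range_coe {α : Type*} [UniformSpace α]
    (h : ¬ CompleteSpace α) :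
    ∃ y : Completion α, y ∉ Set.range ((↑) : α → Completion α) := by
  refine (Set.ne_univ_iff_exists_notMem _).1 fun hrange => h ?_
  rw [completeSpace_iff_isComplete_range (Completion.isUniformInducing_coe α), hrange]
  exact isComplete_univ

lemma UniformSpace.Completion.exists_seq_norm_coe_sub_lt {E : Type*} [SeminormedAddCommGroup E]
    (y : Completion E) {ε : ℕ → ℝ} (hε : ∀ k, 0 < ε k) :
    ∃ u : ℕ → E, ∀ k, ‖(u k : Completion E) - y‖ < ε k := by
  choose u hu using fun k => Metric.denseRange_iff.1 Completion.denseRange_coe y (ε k) (hε k)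
  exact ⟨u, fun k => by rw [← dist_eq_norm, dist_comm]; exact hu k⟩

lemma exists_isBounded_dense_span_image_not_isCompact_closure (Z : Type*)
    [NormedAddCommGroup Z] [NormedSpace ℝ Z] [TopologicalSpace.SeparableSpace Z]
    (hZ : ¬ CompleteSpace Z) :
    ∃ g : ℕ → Z, Bornology.IsBounded (Set.range g) ∧
      (∀ M : Set ℕ, M.Infinite → Dense (Submodule.span ℝ (g '' M) : Set Z)) ∧
      ¬ IsCompact (closure (Set.range g)) := by
  have : Nontrivial Z := by
    by_contra h
    have := not_nontrivial_iff_subsingleton.1 h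
    exact hZ inferInstance
  obtain ⟨x, hx, hxdense⟩ := exists_norm_eq_one_dense_span Z
  obtain ⟨y, hy⟩ := Completion.exists_notMem_range_coe hZ
  obtain ⟨yk, hyk⟩ := Completion.exists_seq_norm_coe_sub_lt y
    (ε := fun k => 1 / k.factorial) fun k => by positivity
  have hgy := tendsto_coe_add_sum_range_inv_pow_smul (fun n => (hx n).le) hyk
  exact ⟨_, isBounded_range_of_tendsto_coe_completion hgy,
    fun M hM => dense_span_image_of_infinite (fun n => (hx n).le) hxdense hyk (fun _ => rfl) hM,
    not_isCompact_closure_range_of_tendsto_coe_completion hgy hy⟩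

theorem stmt_19_general {X : Type*} [NormedAddCommGroup X] [NormedSpace ℝ X]
    (x : ℕ → X) (hxnorm : ∀ n, ‖x n‖ = 1)
    (hxdense : Dense (Submodule.span ℝ (Set.range x) : Set X))
    (y : Completion X) (hy : y ∉ Set.range ((↑) : X → Completion X))
    (yk : ℕ → X) (hyk : ∀ k : ℕ, ‖(yk k : Completion X) - y‖ < 1 / (Nat.factorial k))
    (g : ℕ → X)
    (hg : ∀ k : ℕ, g k = yk k + ∑ n ∈ Finset.range (k + 1), ((((n : ℝ) + 2) ^ k)⁻¹) • x n) :
    (Tendsto (fun k => ((g k : Completion X))) atTop (𝓝 y) ∧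
      Bornology.IsBounded (Set.range g) ∧
      ¬ IsCompact (closure (Set.range g)) ∧
      ∀ M : Set ℕ, M.Infinite → Dense (Submodule.span ℝ (g '' M) : Set X)) ∧
    (∀ (Z : Type) [NormedAddCommGroup Z] [NormedSpace ℝ Z],
      TopologicalSpace.SeparableSpace Z → ¬ CompleteSpace Z →
      ∃ g' : ℕ → Z, Bornology.IsBounded (Set.range g') ∧
        (∀ M : Set ℕ, M.Infinite → Dense (Submodule.span ℝ (g' '' M) : Set Z)) ∧
        ¬ IsCompact (closure (Set.range g'))) := by
  have hx : ∀ n, ‖x n‖ ≤ 1 := fun n => (hxnorm n).le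
  have hgy : Tendsto (fun k => (g k : Completion X)) atTop (𝓝 y) := by
    simpa only [hg] using tendsto_coe_add_sum_range_inv_pow_smul hx hyk
  exact ⟨⟨hgy, isBounded_range_of_tendsto_coe_completion hgy,
    not_isCompact_closure_range_of_tendsto_coe_completion hgy hy,
    fun M hM => dense_span_image_of_infinite hx hxdense hyk hg hM⟩,
    fun Z _ _ _ hZ => exists_isBounded_dense_span_image_not_isCompact_closure Z hZ⟩

theorem stmt_19 {X : Type*} [NormedAddCommGroup X] [NormedSpace ℝ X]
    (hinc : ¬ Function.Surjective ((↑) : X → Completion X))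
    (x : ℕ → X) (hxnorm : ∀ n, ‖x n‖ = 1)
    (hxdense : Dense (Submodule.span ℝ (Set.range x) : Set X))
    (y : Completion X) (hy : y ∉ Set.range ((↑) : X → Completion X))
    (yk : ℕ → X) (hyk : ∀ k : ℕ, ‖(yk k : Completion X) - y‖ < 1 / (Nat.factorial k))
    (g : ℕ → X)
    (hg : ∀ k : ℕ, g k = yk k + ∑ n ∈ Finset.range (k + 1), ((((n : ℝ) + 2) ^ k)⁻¹) • x n) :
    (Tendsto (fun k => ((g k : Completion X))) atTop (𝓝 y) ∧
      Bornology.IsBounded (Set.range g) ∧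
      ¬ IsCompact (closure (Set.range g)) ∧
      ∀ M : Set ℕ, M.Infinite → Dense (Submodule.span ℝ (g '' M) : Set X)) ∧
    (∀ (Z : Type) [NormedAddCommGroup Z] [NormedSpace ℝ Z],
      TopologicalSpace.SeparableSpace Z → ¬ CompleteSpace Z →
      ∃ g' : ℕ → Z, Bornology.IsBounded (Set.range g') ∧
        (∀ M : Set ℕ, M.Infinite → Dense (Submodule.span ℝ (g' '' M) : Set Z)) ∧
        ¬ IsCompact (closure (Set.range g'))) :=
  stmt_19_general x hxnorm hxdense y hy yk hyk g hg
end
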